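/- arXiv:2504.00838 — 4 statements merged into one kernel-verified Lean document; each statement's English description precedes it below -/
import Mathlib

section
/- For any k, s ∈ X and any element g of the subgroup W := ⟨w_k, w_s⟩ of Aut T, one has g⁴ = 1. -/
universe u

namespace DicePaper

/-- Words of length `n` over the level-indexed sequence of alphabets `X`. -/
def Word (X : ℕ → Type u) : ℕ → Type u
  | 0 => PUnit
  | n + 1 => X 0 × Word (fun k => X (k + 1)) n

/-- An automorphism of the spherically homogeneous rooted tree with alphabets `X`,
encoded by its portrait: a permutation of the children alphabet at each vertex. -/
def TreeAut (X : ℕ → Type u) : Type u :=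
  ∀ n, Word X n → Equiv.Perm (X n)

namespace TreeAut

/-- The section (state) of a tree automorphism at a first-level vertex. -/
def sec {X : ℕ → Type u} (f : TreeAut X) (x : X 0) : TreeAut fun k => X (k + 1) :=
  fun n v => f (n + 1) (x, v)

/-- Action of a tree automorphism on the vertices (words). -/
def act : ∀ (X : ℕ → Type u), TreeAut X → ∀ n, Word X n → Word X n
  | _, _, 0, _ => PUnit.unit
  | X, f, n + 1, v => (f 0 PUnit.unit v.1, act (fun k => X (k + 1)) (f.sec v.1) n v.2)

/-- The inverse action on words. -/
def invAct : ∀ (X : ℕ → Type u), TreeAut X → ∀ n, Word X n → Word X n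
  | _, _, 0, _ => PUnit.unit
  | X, f, n + 1, v =>
    ((f 0 PUnit.unit)⁻¹ v.1,
      invAct (fun k => X (k + 1)) (f.sec ((f 0 PUnit.unit)⁻¹ v.1)) n v.2)

variable {X : ℕ → Type u}

instance : One (TreeAut X) := ⟨fun _ _ => 1⟩
instance : Mul (TreeAut X) := ⟨fun f g n v => f n (act X g n v) * g n v⟩
instance : Inv (TreeAut X) := ⟨fun f n v => (f n (invAct X f n v))⁻¹⟩

theorem one_apply (n : ℕ) (v : Word X n) : (1 : TreeAut X) n v = 1 := rfl
theorem mul_apply (f g : TreeAut X) (n : ℕ) (v : Word X n) :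
    (f * g) n v = f n (act X g n v) * g n v := rfl
theorem inv_apply (f : TreeAut X) (n : ℕ) (v : Word X n) :
    f⁻¹ n v = (f n (invAct X f n v))⁻¹ := rfl

theorem act_one : ∀ (n : ℕ) (X : ℕ → Type u) (v : Word X n), act X 1 n v = v
  | 0, _, _ => rfl
  | n + 1, X, v => by
    show ((1 : Equiv.Perm (X 0)) v.1, act _ (sec 1 v.1) n v.2) = v
    have : sec (1 : TreeAut X) v.1 = 1 := rfl
    rw [this, act_one n _ v.2]
    rfl

theorem sec_mul (f g : TreeAut X) (x : X 0) :
    sec (f * g) x = sec f (g 0 PUnit.unit x) * sec g x := rfl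

theorem act_mul : ∀ (n : ℕ) (X : ℕ → Type u) (f g : TreeAut X) (v : Word X n),
    act X (f * g) n v = act X f n (act X g n v)
  | 0, _, _, _, _ => rfl
  | n + 1, X, f, g, v => by
    show ((f * g) 0 PUnit.unit v.1, act _ (sec (f * g) v.1) n v.2) = _
    rw [sec_mul, act_mul n _ (sec f (g 0 PUnit.unit v.1)) (sec g v.1) v.2]
    rfl

theorem sec_inv (f : TreeAut X) (x : X 0) :
    sec f⁻¹ x = (sec f ((f 0 PUnit.unit)⁻¹ x))⁻¹ := by
  funext n v
  rfl

theorem act_invAct : ∀ (n : ℕ) (X : ℕ → Type u) (f : TreeAut X) (v : Word X n),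
    act X f n (invAct X f n v) = v
  | 0, _, _, _ => rfl
  | n + 1, X, f, v => by
    show (f 0 PUnit.unit ((f 0 PUnit.unit)⁻¹ v.1),
      act _ (sec f ((f 0 PUnit.unit)⁻¹ v.1)) n
        (invAct _ (sec f ((f 0 PUnit.unit)⁻¹ v.1)) n v.2)) = v
    rw [act_invAct n _ _ v.2]
    simp
    rfl

theorem invAct_act : ∀ (n : ℕ) (X : ℕ → Type u) (f : TreeAut X) (v : Word X n),
    invAct X f n (act X f n v) = v
  | 0, _, _, _ => rfl
  | n + 1, X, f, v => by
    show ((f 0 PUnit.unit)⁻¹ (f 0 PUnit.unit v.1),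
      invAct _ (sec f ((f 0 PUnit.unit)⁻¹ (f 0 PUnit.unit v.1))) n
        (act _ (sec f v.1) n v.2)) = v
    have h : (f 0 PUnit.unit)⁻¹ (f 0 PUnit.unit v.1) = v.1 := by simp
    rw [h, invAct_act n _ _ v.2]
    rfl

instance : Group (TreeAut X) where
  mul_assoc f g h := by
    funext n v
    show (f n (act X g n (act X h n v)) * g n (act X h n v)) * h n v
        = f n (act X (g * h) n v) * (g n (act X h n v) * h n v)
    rw [act_mul]
    exact mul_assoc _ _ _
  one_mul f := by
    funext n v
    show (1 : TreeAut X) n (act X f n v) * f n v = f n v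
    rw [one_apply, one_mul]
  mul_one f := by
    funext n v
    show f n (act X 1 n v) * (1 : TreeAut X) n v = f n v
    rw [act_one, one_apply, mul_one]
  inv_mul_cancel f := by
    funext n v
    show f⁻¹ n (act X f n v) * f n v = 1
    rw [inv_apply, invAct_act, inv_mul_cancel]

end TreeAut



/-- The alphabet `X = {0,…,7}` identified with `(ℤ/2)³` via binary digits. -/
abbrev V : Type := ZMod 2 × ZMod 2 × ZMod 2

/-- The rooted automorphism of the regular rooted tree over `V` determined by a
permutation of the alphabet: it permutes the first letter of every word. -/
def rooted (σ : Equiv.Perm V) : TreeAut fun _ => V :=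
  fun n _ => match n with
  | 0 => σ
  | _ + 1 => 1

/-- The rooted automorphism `a` (adding `1`, i.e. flipping the first binary digit). -/
def aAut : TreeAut fun _ => V := rooted (Equiv.addLeft ((1, 0, 0) : V))

/-- The rooted automorphism `b` (adding `2`, i.e. flipping the second binary digit). -/
def bAut : TreeAut fun _ => V := rooted (Equiv.addLeft ((0, 1, 0) : V))

/-- The rooted automorphism `c` (adding `4`, i.e. flipping the third binary digit). -/
def cAut : TreeAut fun _ => V := rooted (Equiv.addLeft ((0, 0, 1) : V))

/-- The portrait of the directed automorphism `w`: its first-level sections are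
`w` at `0`, `a` at `3 = (1,1,0)`, `b` at `5 = (1,0,1)`, `c` at `6 = (0,1,1)`,
and trivial elsewhere; `w` fixes the first level. -/
def wPerm : ∀ n, Word (fun _ => V) n → Equiv.Perm V
  | 0, _ => 1
  | n + 1, v =>
    if v.1 = (0 : V) then wPerm n v.2
    else
      match n with
      | 0 =>
        if v.1 = ((1, 1, 0) : V) then Equiv.addLeft ((1, 0, 0) : V)
        else if v.1 = ((1, 0, 1) : V) then Equiv.addLeft ((0, 1, 0) : V)
        else if v.1 = ((0, 1, 1) : V) then Equiv.addLeft ((0, 0, 1) : V)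
        else 1
      | _ + 1 => 1

/-- The directed automorphism `w` with `w = (w, 1, 1, a, 1, b, c, 1)`. -/
def wAut : TreeAut fun _ => V := fun n v => wPerm n v

/-- For `k ∈ X`, the unique element `h_k` of `H = ⟨a,b,c⟩` with `h_k(0) = k`,
as a rooted automorphism of the tree. -/
def hA (k : V) : TreeAut fun _ => V := rooted (Equiv.addLeft k)

/-- The conjugates `w_k := h_k⁻¹ w h_k`, `k ∈ X`. -/
def wk (k : V) : TreeAut fun _ => V := (hA k)⁻¹ * wAut * hA k

/-- The red tetrahedron `{0, 3, 5, 6}`. -/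
def red : Set V := {(0, 0, 0), (1, 1, 0), (1, 0, 1), (0, 1, 1)}

/-- The black tetrahedron `{1, 2, 4, 7}`. -/
def black : Set V := {(1, 0, 0), (0, 1, 0), (0, 0, 1), (1, 1, 1)}

end DicePaper

namespace DicePaper

open TreeAut

/-! ### Generic group lemmas -/

theorem conjPow {G : Type*} [Group G] (a b : G) (n : ℕ) :
    (a * b * a⁻¹) ^ n = a * b ^ n * a⁻¹ := by
  induction n with
  | zero => simp
  | succ n ih => rw [pow_succ, pow_succ, ih]; group

theorem pow4_of_sq {G : Type*} [Group G] {g : G} (h : g * g = 1) : g ^ 4 = 1 := by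
  rw [show (4 : ℕ) = 2 * 2 from rfl, pow_mul, pow_two g, h, one_pow]

/-- Exponent of a dihedral-type group generated by two involutions whose
product has order dividing 4. -/
theorem dihedral4 {G : Type*} [Group G] (x y : G) (hx : x * x = 1) (hy : y * y = 1)
    (h4 : (x * y) ^ 4 = 1) : ∀ g ∈ Subgroup.closure ({x, y} : Set G), g ^ 4 = 1 := by
  set r := x * y with hr
  have hxi : x⁻¹ = x := by rw [← mul_eq_one_iff_inv_eq, hx]
  have hyi : y⁻¹ = y := by rw [← mul_eq_one_iff_inv_eq, hy]
  have hsc : SemiconjBy x r r⁻¹ := by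
    show x * r = r⁻¹ * x
    rw [hr, mul_inv_rev, hxi, hyi, ← mul_assoc, hx, one_mul, mul_assoc, hx, mul_one]
  have hz : ∀ i : ℤ, x * r ^ i = r ^ (-i) * x := by
    intro i
    have := hsc.zpow_right i
    rw [inv_zpow, ← zpow_neg] at this
    exact this
  have hrz : ∀ i : ℤ, (r ^ i) ^ 4 = 1 := by
    intro i
    rw [← zpow_natCast (r ^ i) 4, ← zpow_mul, mul_comm, zpow_mul, zpow_natCast r 4, h4,
      one_zpow]
  intro g hg
  have key : ∃ i : ℤ, g = r ^ i ∨ g = r ^ i * x := by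
    induction hg using Subgroup.closure_induction with
    | mem z hz' =>
      rcases hz' with h | h
      · exact ⟨0, Or.inr (by rw [h, zpow_zero, one_mul])⟩
      · refine ⟨-1, Or.inr ?_⟩
        rw [h, zpow_neg_one, hr, mul_inv_rev, hxi, hyi, mul_assoc, hx, mul_one]
    | one => exact ⟨0, Or.inl (zpow_zero r).symm⟩
    | mul a b _ _ ha hb =>
      obtain ⟨i, hi⟩ := ha
      obtain ⟨j, hj⟩ := hb
      rcases hi with hi | hi <;> rcases hj with hj | hj
      · exact ⟨i + j, Or.inl (by rw [hi, hj, zpow_add])⟩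
      · exact ⟨i + j, Or.inr (by rw [hi, hj, zpow_add, mul_assoc])⟩
      · refine ⟨i - j, Or.inr ?_⟩
        rw [hi, hj, mul_assoc, hz j, ← mul_assoc, ← zpow_add, sub_eq_add_neg]
      · refine ⟨i - j, Or.inl ?_⟩
        rw [hi, hj, mul_assoc, ← mul_assoc x (r ^ j) x, hz j, mul_assoc, hx, mul_one,
          ← zpow_add, sub_eq_add_neg]
    | inv a _ ha =>
      obtain ⟨i, hi⟩ := ha
      rcases hi with hi | hi
      · exact ⟨-i, Or.inl (by rw [hi, ← zpow_neg])⟩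
      · refine ⟨i, Or.inr ?_⟩
        rw [hi, mul_inv_rev, hxi, ← zpow_neg, hz (-i), neg_neg]
  obtain ⟨i, hi⟩ := key
  rcases hi with hi | hi
  · rw [hi]; exact hrz i
  · rw [hi]
    apply pow4_of_sq
    rw [mul_assoc, ← mul_assoc x (r ^ i) x, hz i, mul_assoc, hx, mul_one, ← zpow_add]
    simp

/-! ### Basic facts about `V` and rooted automorphisms -/

theorem vv : ∀ v : V, v + v = 0 := by decide

theorem addLeft_mul' (s t : V) :
    Equiv.addLeft s * Equiv.addLeft t = Equiv.addLeft (s + t) := by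
  refine Equiv.ext fun x => ?_
  show s + (t + x) = s + t + x
  rw [add_assoc]

theorem addLeft_zero' : Equiv.addLeft (0 : V) = 1 := by
  refine Equiv.ext fun x => ?_
  show (0 : V) + x = x
  rw [zero_add]

theorem addLeft_sq (t : V) : Equiv.addLeft t * Equiv.addLeft t = 1 := by
  rw [addLeft_mul', vv, addLeft_zero']

theorem addLeft_inv' (t : V) : (Equiv.addLeft t)⁻¹ = Equiv.addLeft t :=
  inv_eq_of_mul_eq_one_left (addLeft_sq t)

theorem rooted_mul (σ τ : Equiv.Perm V) : rooted σ * rooted τ = rooted (σ * τ) := by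
  funext n v
  cases n with
  | zero => rfl
  | succ n =>
    show (1 : Equiv.Perm V) * 1 = 1
    rw [mul_one]

theorem rooted_one : rooted (1 : Equiv.Perm V) = 1 := by
  funext n v
  cases n <;> rfl

theorem rooted_inv (σ : Equiv.Perm V) : (rooted σ)⁻¹ = rooted σ⁻¹ := by
  funext n v
  cases n with
  | zero => rfl
  | succ n =>
    show (1 : Equiv.Perm V)⁻¹ = 1
    rw [inv_one]

theorem sec_rooted (σ : Equiv.Perm V) (x : V) : TreeAut.sec (rooted σ) x = 1 := by
  funext n v
  rfl

/-! ### The root permutation and sections -/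

/-- The root permutation of a tree automorphism. -/
def root (f : TreeAut fun _ => V) : Equiv.Perm V := f 0 PUnit.unit

theorem root_mul (f g : TreeAut fun _ => V) : root (f * g) = root f * root g := rfl

theorem root_inv (f : TreeAut fun _ => V) : root f⁻¹ = (root f)⁻¹ := rfl

theorem root_one : root (1 : TreeAut fun _ => V) = 1 := rfl

theorem root_rooted (σ : Equiv.Perm V) : root (rooted σ) = σ := rfl

theorem root_w : root wAut = 1 := rfl

theorem root_pow (f : TreeAut fun _ => V) (m : ℕ) : root (f ^ m) = root f ^ m := by
  induction m with
  | zero => rw [pow_zero, pow_zero]; rfl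
  | succ m ih => rw [pow_succ, pow_succ, root_mul, ih]

theorem sec_pow (f : TreeAut fun _ => V) (h : root f = 1) (m : ℕ) (x : V) :
    TreeAut.sec (f ^ m) x = TreeAut.sec f x ^ m := by
  induction m with
  | zero => rw [pow_zero, pow_zero]; rfl
  | succ m ih =>
    rw [pow_succ, TreeAut.sec_mul, show f 0 PUnit.unit = 1 from h, Equiv.Perm.one_apply,
      ih, pow_succ]

theorem ext1 (f : TreeAut fun _ => V) (h0 : root f = 1)
    (h : ∀ x : V, TreeAut.sec f x = 1) : f = 1 := by
  funext n v
  cases n with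
  | zero => exact h0
  | succ n => exact congrFun (congrFun (h v.1) n) v.2

theorem pow_eq_one' (f : TreeAut fun _ => V) (m : ℕ) (h0 : root f = 1)
    (h : ∀ x : V, TreeAut.sec f x ^ m = 1) : f ^ m = 1 :=
  ext1 _ (by rw [root_pow, h0, one_pow]) fun x => by rw [sec_pow f h0, h x]

/-! ### Sections of `w` -/

/-- The label of the first-level section of `w` at a nonzero vertex. -/
def pv (x : V) : V :=
  if x = ((1, 1, 0) : V) then (1, 0, 0)
  else if x = ((1, 0, 1) : V) then (0, 1, 0)
  else if x = ((0, 1, 1) : V) then (0, 0, 1)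
  else 0

/-- Normal form of the first-level sections of `w`. -/
def usec (x : V) : TreeAut fun _ => V :=
  if x = 0 then wAut else rooted (Equiv.addLeft (pv x))

theorem sec_w_zero : TreeAut.sec wAut 0 = wAut := by
  funext n v
  show wPerm (n + 1) ((0 : V), v) = wPerm n v
  simp [wPerm]

theorem sec_w (x : V) : TreeAut.sec wAut x = usec x := by
  by_cases hx : x = 0
  · rw [hx, usec, if_pos rfl]
    exact sec_w_zero
  · rw [usec, if_neg hx]
    funext n v
    show wPerm (n + 1) (x, v) = rooted (Equiv.addLeft (pv x)) n v
    cases n with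
    | zero =>
      show wPerm 1 (x, v) = Equiv.addLeft (pv x)
      show (if x = (0 : V) then wPerm 0 v else
        if x = ((1, 1, 0) : V) then Equiv.addLeft ((1, 0, 0) : V)
        else if x = ((1, 0, 1) : V) then Equiv.addLeft ((0, 1, 0) : V)
        else if x = ((0, 1, 1) : V) then Equiv.addLeft ((0, 0, 1) : V)
        else 1) = _
      rw [if_neg hx, pv]
      split_ifs <;> first | rfl | rw [addLeft_zero']
    | succ n =>
      show wPerm (n + 2) (x, v) = 1
      show (if x = (0 : V) then wPerm (n + 1) v else 1) = 1
      rw [if_neg hx]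

theorem w_sq : wAut * wAut = 1 := by
  have key : ∀ n (v : Word (fun _ => V) n), (wAut * wAut) n v = 1 := by
    intro n
    induction n with
    | zero =>
      intro v
      show (1 : Equiv.Perm V) * 1 = 1
      rw [mul_one]
    | succ n ih =>
      intro v
      have h1 : (wAut * wAut) (n + 1) v
          = (TreeAut.sec wAut v.1 * TreeAut.sec wAut v.1) n v.2 := rfl
      rw [h1, sec_w]
      by_cases hx : v.1 = 0
      · rw [hx, usec, if_pos rfl]
        exact ih v.2
      · rw [usec, if_neg hx, rooted_mul, addLeft_sq, rooted_one]
        rfl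
  funext n v
  exact key n v

theorem usec_sq (x : V) : usec x * usec x = 1 := by
  rw [usec]
  split_ifs with hx
  · exact w_sq
  · rw [rooted_mul, addLeft_sq, rooted_one]

theorem w_pow4 : wAut ^ 4 = 1 := pow4_of_sq w_sq

/-! ### The conjugates `w_k` and the key fourth-power computation -/

theorem hA_mul (k s : V) : hA k * hA s = hA (k + s) := by
  rw [hA, hA, hA, rooted_mul, addLeft_mul']

theorem hA_inv (t : V) : (hA t)⁻¹ = hA t := by
  rw [hA, rooted_inv, addLeft_inv']

theorem hA_sq (t : V) : hA t * hA t = 1 := by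
  rw [hA_mul, vv, hA, addLeft_zero', rooted_one]

theorem sec_hA (t : V) (x : V) : TreeAut.sec (hA t) x = 1 := sec_rooted _ x

theorem root_hA (t : V) : root (hA t) = Equiv.addLeft t := rfl

theorem root_wk (d : V) : root (wk d) = 1 := by
  rw [wk, root_mul, root_mul, root_inv, root_hA, root_w, mul_one, inv_mul_cancel]

theorem sec_wk (d x : V) : TreeAut.sec (wk d) x = usec (d + x) := by
  have h : wk d = hA d * wAut * hA d := by rw [wk, hA_inv]
  rw [h, TreeAut.sec_mul, TreeAut.sec_mul, sec_hA, sec_hA, one_mul, mul_one,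
    show (hA d) 0 PUnit.unit x = d + x from rfl, sec_w]

/-- For a basis vector `e`, at least one of `x`, `e + x` is outside the support of `w`. -/
theorem pair_triv1 : ∀ x : V,
    (x ≠ 0 ∧ pv x = 0) ∨ (((1, 0, 0) : V) + x ≠ 0 ∧ pv ((1, 0, 0) + x) = 0) := by decide

theorem pair_triv2 : ∀ x : V,
    (x ≠ 0 ∧ pv x = 0) ∨ (((0, 1, 0) : V) + x ≠ 0 ∧ pv ((0, 1, 0) + x) = 0) := by decide

theorem pair_triv3 : ∀ x : V,
    (x ≠ 0 ∧ pv x = 0) ∨ (((0, 0, 1) : V) + x ≠ 0 ∧ pv ((0, 0, 1) + x) = 0) := by decide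

theorem usec_triv (y : V) (h1 : y ≠ 0) (h2 : pv y = 0) : usec y = 1 := by
  rw [usec, if_neg h1, h2, addLeft_zero', rooted_one]

theorem u_pair (e : V) (he : e = (1, 0, 0) ∨ e = (0, 1, 0) ∨ e = (0, 0, 1)) (x : V) :
    usec x = 1 ∨ usec (e + x) = 1 := by
  have hp : (x ≠ 0 ∧ pv x = 0) ∨ (e + x ≠ 0 ∧ pv (e + x) = 0) := by
    rcases he with h | h | h <;> rw [h]
    exacts [pair_triv1 x, pair_triv2 x, pair_triv3 x]
  rcases hp with ⟨h1, h2⟩ | ⟨h1, h2⟩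
  · exact Or.inl (usec_triv _ h1 h2)
  · exact Or.inr (usec_triv _ h1 h2)

theorem w_rooted_4 (e : V) (hyp : ∀ x : V, usec x = 1 ∨ usec (e + x) = 1) :
    (wAut * rooted (Equiv.addLeft e)) ^ 4 = 1 := by
  set g := wAut * rooted (Equiv.addLeft e) with hg
  have hroot : root g = Equiv.addLeft e := by
    rw [hg, root_mul, root_rooted, root_w, one_mul]
  have hroot2 : root (g * g) = 1 := by
    rw [root_mul, hroot, addLeft_sq]
  have hsecg : ∀ y : V, TreeAut.sec g y = usec (e + y) := by
    intro y
    rw [hg, TreeAut.sec_mul, sec_rooted, mul_one,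
      show (rooted (Equiv.addLeft e)) 0 PUnit.unit y = e + y from rfl, sec_w]
  have hsec2 : ∀ x : V, TreeAut.sec (g * g) x = usec x * usec (e + x) := by
    intro x
    rw [TreeAut.sec_mul, show g 0 PUnit.unit x = e + x from
      by rw [show g 0 PUnit.unit = Equiv.addLeft e from hroot]; rfl,
      hsecg, hsecg, ← add_assoc, vv, zero_add]
  have h2 : (g * g) ^ 2 = 1 := by
    apply pow_eq_one' _ 2 hroot2
    intro x
    rw [hsec2]
    rcases hyp x with h | h
    · rw [h, one_mul, pow_two, usec_sq]
    · rw [h, mul_one, pow_two, usec_sq]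
  rw [show (4 : ℕ) = 2 * 2 from rfl, pow_mul, pow_two g, h2]

theorem rooted_w_4 (e : V) (hyp : ∀ x : V, usec x = 1 ∨ usec (e + x) = 1) :
    (rooted (Equiv.addLeft e) * wAut) ^ 4 = 1 := by
  have h : rooted (Equiv.addLeft e) * wAut
      = rooted (Equiv.addLeft e) * (wAut * rooted (Equiv.addLeft e))
        * (rooted (Equiv.addLeft e))⁻¹ := by group
  rw [h, conjPow, w_rooted_4 e hyp, mul_one, mul_inv_cancel]

theorem pv_cases : ∀ x : V, x ≠ 0 →
    pv x = 0 ∨ pv x = (1, 0, 0) ∨ pv x = (0, 1, 0) ∨ pv x = (0, 0, 1) := by decide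

theorem usec_pow4 (y x : V) : (usec y * usec x) ^ 4 = 1 := by
  by_cases hy : y = 0
  · subst hy
    rw [show usec (0 : V) = wAut from if_pos rfl]
    by_cases hx : x = 0
    · subst hx
      rw [show usec (0 : V) = wAut from if_pos rfl, w_sq, one_pow]
    · rw [show usec x = rooted (Equiv.addLeft (pv x)) from if_neg hx]
      rcases pv_cases x hx with h | h | h | h
      · rw [h, addLeft_zero', rooted_one, mul_one, w_pow4]
      all_goals rw [h]; exact w_rooted_4 _ (u_pair _ (by tauto))
  · by_cases hx : x = 0
    · subst hx
      rw [show usec (0 : V) = wAut from if_pos rfl,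
        show usec y = rooted (Equiv.addLeft (pv y)) from if_neg hy]
      rcases pv_cases y hy with h | h | h | h
      · rw [h, addLeft_zero', rooted_one, one_mul, w_pow4]
      all_goals rw [h]; exact rooted_w_4 _ (u_pair _ (by tauto))
    · rw [show usec y = rooted (Equiv.addLeft (pv y)) from if_neg hy,
        show usec x = rooted (Equiv.addLeft (pv x)) from if_neg hx]
      apply pow4_of_sq
      rw [rooted_mul, addLeft_mul', rooted_mul, addLeft_mul', vv, addLeft_zero', rooted_one]

theorem wkw4 (d : V) : (wk d * wAut) ^ 4 = 1 := by
  apply pow_eq_one' _ 4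
  · rw [root_mul, root_wk, root_w, one_mul]
  · intro x
    rw [TreeAut.sec_mul, show wAut 0 PUnit.unit x = x from rfl, sec_wk, sec_w, usec_pow4]

theorem wk_sq (k : V) : wk k * wk k = 1 := by
  rw [wk, hA_inv]
  have h : hA k * wAut * hA k * (hA k * wAut * hA k)
      = hA k * (wAut * ((hA k * hA k) * wAut)) * hA k := by group
  rw [h, hA_sq, one_mul, w_sq, mul_one, hA_sq]

theorem conj_rel (k s : V) :
    hA s * (wk k * wk s) * hA s = wk (k + s) * wAut := by
  rw [wk, wk, wk, hA_inv, hA_inv, hA_inv]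
  have h : hA s * (hA k * wAut * hA k * (hA s * wAut * hA s)) * hA s
      = (hA s * hA k) * wAut * (hA k * hA s) * wAut * (hA s * hA s) := by group
  rw [h, hA_sq, mul_one, hA_mul, hA_mul, add_comm s k]

theorem wk_mul_pow4 (k s : V) : (wk k * wk s) ^ 4 = 1 := by
  have h : wk k * wk s = hA s * (wk (k + s) * wAut) * (hA s)⁻¹ := by
    rw [← conj_rel k s, hA_inv]
    have h2 : hA s * (hA s * (wk k * wk s) * hA s) * hA s
        = (hA s * hA s) * (wk k * wk s) * (hA s * hA s) := by group
    rw [h2, hA_sq, one_mul, mul_one]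
  rw [h, conjPow, wkw4, mul_one, mul_inv_cancel]


end DicePaper

open DicePaper in
/-- for any `k, s ∈ X` and any `g ∈ W = ⟨w_k, w_s⟩`, one has `g⁴ = 1`. -/
theorem stmt10 :
    ∀ k s : V, ∀ g ∈ (Subgroup.closure {wk k, wk s} : Subgroup (TreeAut fun _ => V)),
      g ^ 4 = 1 := by
  intro k s
  exact dihedral4 (wk k) (wk s) (wk_sq k) (wk_sq s) (wk_mul_pow4 k s)
end

section
/- The tetrahedron group G = ⟨w, a, b, c⟩ ≤ Aut T is a 2-group: for every g ∈ G there exists n ≥ 0 with g^(2^n) = 1. -/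
universe u

namespace DicePaper

namespace TorsionProof

open TreeAut

abbrev TA : Type := TreeAut (fun _ : ℕ => V)

/-- The root permutation, as a group hom. -/
def root (f : TA) : Equiv.Perm V := f 0 PUnit.unit

theorem root_one : root (1 : TA) = 1 := rfl

theorem root_mul (f g : TA) : root (f * g) = root f * root g := rfl

theorem sec_one (x : V) : sec (1 : TA) x = 1 := rfl

theorem sec_mul'' (f g : TA) (x : V) :
    sec (f * g) x = sec f (root g x) * sec g x := sec_mul f g x

/-- Extensionality: trivial root and trivial sections imply trivial. -/
theorem eq_one_of_root_sec (f : TA) (hr : root f = 1) (hs : ∀ x, sec f x = 1) :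
    f = 1 := by
  funext n v
  cases n with
  | zero =>
    cases v
    exact hr
  | succ n =>
    exact congrFun (congrFun (hs v.1) n) v.2

theorem root_pow (f : TA) (hf : root f = 1) : ∀ N, root (f ^ N) = 1
  | 0 => rfl
  | N + 1 => by rw [pow_succ, root_mul, root_pow f hf N, hf, mul_one]

theorem sec_pow (f : TA) (hf : root f = 1) (x : V) :
    ∀ N, sec (f ^ N) x = (sec f x) ^ N
  | 0 => by rw [pow_zero, pow_zero]; rfl
  | N + 1 => by
    rw [pow_succ, sec_mul'', hf]
    show sec (f ^ N) x * sec f x = _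
    rw [pow_succ, sec_pow f hf x N]

/-- Assembling torsion from torsion of the sections. -/
theorem torsion_of_sections (f : TA) (hf : root f = 1)
    (h : ∀ x, ∃ n : ℕ, (sec f x) ^ 2 ^ n = 1) : ∃ n : ℕ, f ^ 2 ^ n = 1 := by
  choose n hn using h
  refine ⟨Finset.univ.sup n, eq_one_of_root_sec _ (root_pow f hf _) fun x => ?_⟩
  rw [sec_pow f hf]
  have hle : n x ≤ Finset.univ.sup n := Finset.le_sup (Finset.mem_univ x)
  have : (2:ℕ) ^ Finset.univ.sup n = 2 ^ n x * 2 ^ (Finset.univ.sup n - n x) := by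
    rw [← pow_add, Nat.add_sub_cancel' hle]
  rw [this, pow_mul, hn x, one_pow]

theorem torsion_of_sq {g : TA} (h : ∃ n : ℕ, (g * g) ^ 2 ^ n = 1) :
    ∃ n : ℕ, g ^ 2 ^ n = 1 := by
  obtain ⟨n, hn⟩ := h
  refine ⟨n + 1, ?_⟩
  rw [pow_succ', pow_mul, sq]
  exact hn

/- ### rooted automorphisms -/

theorem rooted_mul (σ τ : Equiv.Perm V) : rooted σ * rooted τ = rooted (σ * τ) := by
  funext n v
  cases n with
  | zero => rfl
  | succ n => show (1 : Equiv.Perm V) * 1 = 1; rw [mul_one]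

theorem addLeft_mul (s t : V) :
    Equiv.addLeft s * Equiv.addLeft t = Equiv.addLeft (s + t) := by
  apply Equiv.ext; intro x
  show s + (t + x) = (s + t) + x
  rw [add_assoc]

theorem addLeft_zero' : Equiv.addLeft (0 : V) = 1 :=
  Equiv.ext fun x => zero_add x

theorem add_self_V : ∀ t : V, t + t = 0 := by decide

theorem hA_mul (s t : V) : hA s * hA t = hA (s + t) := by
  rw [hA, hA, hA, rooted_mul, addLeft_mul]

theorem hA_zero : hA 0 = (1 : TA) := by
  funext n v
  cases n with
  | zero => show Equiv.addLeft (0 : V) = 1; exact addLeft_zero'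
  | succ n => rfl

theorem hA_sq (t : V) : hA t * hA t = 1 := by rw [hA_mul, add_self_V, hA_zero]

theorem hA_inv (t : V) : (hA t)⁻¹ = hA t := by
  rw [inv_eq_iff_mul_eq_one, hA_sq]

theorem root_hA (t : V) : root (hA t) = Equiv.addLeft t := rfl

theorem sec_hA (t : V) (x : V) : sec (hA t) x = 1 := rfl

theorem root_w : root wAut = 1 := rfl

/- ### `w` is an involution -/

theorem wPerm_addLeft : ∀ n (v : Word (fun _ => V) n), ∃ t, wPerm n v = Equiv.addLeft t
  | 0, _ => ⟨0, addLeft_zero'.symm⟩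
  | n + 1, v => by
    show ∃ t, (if v.1 = (0 : V) then wPerm n v.2 else _) = Equiv.addLeft t
    by_cases h : v.1 = (0 : V)
    · rw [if_pos h]; exact wPerm_addLeft n v.2
    · rw [if_neg h]
      cases n with
      | zero =>
        show ∃ t, (if v.1 = ((1,1,0):V) then Equiv.addLeft ((1,0,0):V)
          else if v.1 = ((1,0,1):V) then Equiv.addLeft ((0,1,0):V)
          else if v.1 = ((0,1,1):V) then Equiv.addLeft ((0,0,1):V) else 1) = Equiv.addLeft t
        by_cases h1 : v.1 = ((1,1,0) : V)
        · exact ⟨(1,0,0), by rw [if_pos h1]⟩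
        · by_cases h2 : v.1 = ((1,0,1) : V)
          · exact ⟨(0,1,0), by rw [if_neg h1, if_pos h2]⟩
          · by_cases h3 : v.1 = ((0,1,1) : V)
            · exact ⟨(0,0,1), by rw [if_neg h1, if_neg h2, if_pos h3]⟩
            · exact ⟨0, by rw [if_neg h1, if_neg h2, if_neg h3, addLeft_zero']⟩
      | succ n => exact ⟨0, addLeft_zero'.symm⟩

theorem sec_w_zero : sec wAut (0 : V) = wAut := by
  funext n v
  show wPerm (n + 1) ((0 : V), v) = wPerm n v
  show (if (0 : V) = (0 : V) then wPerm n v else _) = wPerm n v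
  rw [if_pos rfl]

theorem wPerm_ne_snd (n : ℕ) (x : V) (hx : x ≠ 0) (u u' : Word (fun _ => V) n) :
    wPerm (n + 1) (x, u) = wPerm (n + 1) (x, u') := by
  show (if x = (0:V) then wPerm n u else _) = (if x = (0:V) then wPerm n u' else _)
  rw [if_neg hx, if_neg hx]
  cases n with
  | zero => rfl
  | succ n => rfl

theorem wPerm_cons_zero (n : ℕ) (u : Word (fun _ => V) n) :
    wPerm (n + 1) ((0 : V), u) = wPerm n u := by
  show (if (0:V) = (0:V) then wPerm n u else _) = wPerm n u
  rw [if_pos rfl]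

theorem wPerm_act : ∀ n (v : Word (fun _ => V) n),
    wPerm n (act (fun _ => V) wAut n v) = wPerm n v
  | 0, _ => rfl
  | n + 1, v => by
    obtain ⟨x, u⟩ : V × Word (fun _ => V) n := v
    have hact : act (fun _ => V) wAut (n+1) (x, u)
        = (x, act (fun _ => V) (sec wAut x) n u) := rfl
    rw [hact]
    by_cases h : x = (0 : V)
    · rw [h, sec_w_zero, wPerm_cons_zero, wPerm_cons_zero, wPerm_act n u]
    · exact wPerm_ne_snd n x h _ u

theorem w_sq : wAut * wAut = 1 := by
  funext n v
  show wPerm n (act (fun _ => V) wAut n v) * wPerm n v = 1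
  rw [wPerm_act]
  obtain ⟨t, ht⟩ := wPerm_addLeft n v
  rw [ht, addLeft_mul, add_self_V, addLeft_zero']

/- ### `secw`: closed form of the sections of `w` -/

def sval (y : V) : V :=
  if y = ((1,1,0) : V) then (1,0,0)
  else if y = ((1,0,1) : V) then (0,1,0)
  else if y = ((0,1,1) : V) then (0,0,1)
  else 0

def secw (y : V) : TA := if y = 0 then wAut else hA (sval y)

theorem secw_zero : secw 0 = wAut := by
  simp [secw]

theorem secw_ne (y : V) (h : y ≠ 0) : secw y = hA (sval y) := by
  simp only [secw]; rw [if_neg h]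

theorem sec_wAut (y : V) : sec wAut y = secw y := by
  by_cases h : y = 0
  · rw [h, secw_zero]; exact sec_w_zero
  · rw [secw_ne y h]
    funext n v
    show wPerm (n + 1) (y, v) = hA (sval y) n v
    show (if y = (0:V) then wPerm n v else _) = _
    rw [if_neg h]
    cases n with
    | zero =>
      show (if y = ((1,1,0):V) then Equiv.addLeft ((1,0,0):V)
        else if y = ((1,0,1):V) then Equiv.addLeft ((0,1,0):V)
        else if y = ((0,1,1):V) then Equiv.addLeft ((0,0,1):V) else 1)
        = Equiv.addLeft (sval y)
      rw [sval]
      by_cases h1 : y = ((1,1,0):V)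
      · rw [if_pos h1, if_pos h1]
      · rw [if_neg h1, if_neg h1]
        by_cases h2 : y = ((1,0,1):V)
        · rw [if_pos h2, if_pos h2]
        · rw [if_neg h2, if_neg h2]
          by_cases h3 : y = ((0,1,1):V)
          · rw [if_pos h3, if_pos h3]
          · rw [if_neg h3, if_neg h3, addLeft_zero']
    | succ n => rfl

theorem secw_sq (y : V) : secw y * secw y = 1 := by
  by_cases h : y = 0
  · rw [h, secw_zero, w_sq]
  · rw [secw_ne y h, hA_sq]

/- ### the conjugates `wk` -/

theorem wk_zero : wk 0 = wAut := by
  rw [wk, hA_zero, inv_one, one_mul, mul_one]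

theorem root_hA_apply (k x : V) : root (hA k) x = k + x := rfl

theorem root_wk (k : V) : root (wk k) = 1 := by
  rw [wk, hA_inv, root_mul, root_mul, root_hA, root_w, mul_one, addLeft_mul,
    add_self_V, addLeft_zero']

theorem sec_wk (k x : V) : sec (wk k) x = secw (k + x) := by
  rw [wk, hA_inv, mul_assoc, sec_mul'', sec_hA, one_mul, sec_mul'', sec_hA,
    mul_one, root_hA_apply, sec_wAut]

theorem wk_sq (k : V) : wk k * wk k = 1 := by
  have h : ∀ (h g : TA), (h⁻¹ * g * h) * (h⁻¹ * g * h) = h⁻¹ * (g * g) * h := by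
    intros; group
  rw [wk, h, w_sq, mul_one, inv_mul_cancel]

theorem wk_conj (k l : V) : hA l * wk k * hA l = wk (k + l) := by
  rw [wk, wk, hA_inv, hA_inv,
    show hA l * (hA k * wAut * hA k) * hA l = (hA l * hA k) * wAut * (hA k * hA l) from by group,
    hA_mul, hA_mul, add_comm l k]

/- ### products of conjugates -/

def W (L : List V) : TA := (L.map wk).prod

theorem W_nil : W [] = 1 := rfl

theorem W_cons (k : V) (L : List V) : W (k :: L) = wk k * W L := by
  rw [W, W, List.map_cons, List.prod_cons]

theorem W_append (L L' : List V) : W (L ++ L') = W L * W L' := by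
  rw [W, W, W, List.map_append, List.prod_append]

theorem root_W (L : List V) : root (W L) = 1 := by
  induction L with
  | nil => rfl
  | cons k L ih => rw [W_cons, root_mul, root_wk, ih, one_mul]

theorem conj_W (h : V) (L : List V) :
    hA h * W L * hA h = W (L.map (· + h)) := by
  induction L with
  | nil =>
    rw [W_nil, mul_one, hA_sq, List.map_nil, W_nil]
  | cons k L ih =>
    have key : hA h * (wk k * W L) * hA h
        = (hA h * wk k * hA h) * (hA h * W L * hA h) := by
      rw [show (hA h * wk k * hA h) * (hA h * W L * hA h)
          = hA h * wk k * ((hA h * hA h) * W L * hA h) from by group, hA_sq, one_mul]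
      group
    rw [List.map_cons, W_cons, W_cons, key, wk_conj, ih]

theorem W_inv (L : List V) : (W L)⁻¹ = W L.reverse := by
  induction L with
  | nil => rw [W_nil, inv_one]; rfl
  | cons k L ih =>
    have hwk : (wk k)⁻¹ = wk k := inv_eq_of_mul_eq_one_right (wk_sq k)
    rw [W_cons, mul_inv_rev, ih, hwk, List.reverse_cons, W_append, W_cons, W_nil, mul_one]

theorem sec_W (L : List V) (x : V) :
    sec (W L) x = (L.map (fun k => secw (k + x))).prod := by
  induction L with
  | nil => rw [W_nil, List.map_nil, List.prod_nil, sec_one]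
  | cons k L ih =>
    rw [W_cons, sec_mul'', root_W, Equiv.Perm.one_apply, sec_wk, ih,
      List.map_cons, List.prod_cons]

theorem w_mul_hA_W (t : V) (L : List V) : wAut * (hA t * W L) = hA t * W (t :: L) := by
  rw [W_cons, wk, hA_inv,
    show hA t * (hA t * wAut * hA t * W L) = (hA t * hA t) * (wAut * (hA t * W L)) from by group,
    hA_sq, one_mul]

/- ### char-2 arithmetic facts -/

theorem eq_of_add_eq_zero_V : ∀ s x : V, s + x = 0 → x = s := by decide

theorem add_eq_self_V : ∀ h x : V, x + h = x → h = 0 := by decide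

theorem add_shuffle_V : ∀ a b c : V, a + b + c = (a + c) + b := by
  intro a b c
  rw [add_assoc, add_assoc, add_comm b c]

theorem add_cancel_V (a b : V) : a + b + b = a := by
  rw [add_assoc, add_self_V, add_zero]

/- ### counting lemmas -/

theorem count_lt_of_exists_ne {L : List V} {x : V} (h : ∃ k ∈ L, k ≠ x) :
    L.count x < L.length := by
  refine lt_of_le_of_ne List.count_le_length fun e => ?_
  obtain ⟨k, hk, hne⟩ := h
  exact hne ((List.count_eq_length.1 e k hk).symm)

theorem count_map_add (L : List V) (h x : V) :
    (L.map (· + h)).count x = L.count (x + h) := by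
  induction L with
  | nil => rfl
  | cons k L ih =>
    rw [List.map_cons, List.count_cons, List.count_cons, ih]
    simp only [beq_iff_eq]
    by_cases e : k + h = x
    · have e2 : k = x + h := by rw [← e, add_cancel_V]
      rw [if_pos e, if_pos e2]
    · have e2 : ¬(k = x + h) := fun e2 => e (by rw [e2, add_cancel_V])
      rw [if_neg e, if_neg e2]

theorem count_pair_le (L : List V) (x y : V) (hxy : x ≠ y) :
    L.count x + L.count y ≤ L.length := by
  induction L with
  | nil => simp
  | cons k L ih =>
    rw [List.count_cons, List.count_cons, List.length_cons]
    simp only [beq_iff_eq]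
    by_cases h1 : k = x
    · rw [if_pos h1, if_neg (fun h2 => hxy (h1.symm.trans h2))]
      omega
    · rw [if_neg h1]
      by_cases h2 : k = y
      · rw [if_pos h2]; omega
      · rw [if_neg h2]; omega

theorem count_pair_lt {L : List V} {x y : V} (hxy : x ≠ y)
    (h : ∃ k ∈ L, k ≠ x ∧ k ≠ y) : L.count x + L.count y < L.length := by
  induction L with
  | nil => simp at h
  | cons k L ih =>
    rw [List.count_cons, List.count_cons, List.length_cons]
    simp only [beq_iff_eq]
    obtain ⟨k', hk', hne⟩ := h
    rcases List.mem_cons.1 hk' with rfl | hmem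
    · rw [if_neg hne.1, if_neg hne.2]
      have := count_pair_le L x y hxy
      omega
    · have := ih ⟨k', hmem, hne⟩
      by_cases h1 : k = x
      · rw [if_pos h1, if_neg (fun h2 => hxy (h1.symm.trans h2))]; omega
      · rw [if_neg h1]
        by_cases h2 : k = y
        · rw [if_pos h2]; omega
        · rw [if_neg h2]; omega

/- ### dihedral lemma: words in two involutions whose product has order dividing 4 -/

section Dihedral

variable {G : Type*} [Group G] {x y : G}

theorem invol_conj_zpow (hx : x * x = 1) (hy : y * y = 1) (j : ℤ) :
    x * (x * y) ^ j = (x * y) ^ (-j) * x := by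
  have hxinv : x⁻¹ = x := (inv_eq_of_mul_eq_one_right hx)
  have hyinv : y⁻¹ = y := (inv_eq_of_mul_eq_one_right hy)
  have hconj : x * (x * y) * x⁻¹ = (x * y)⁻¹ := by
    rw [hxinv, mul_inv_rev, hxinv, hyinv, ← mul_assoc, hx, one_mul]
  have h1 : x * (x * y) ^ j * x⁻¹ = (x * (x * y) * x⁻¹) ^ j := by
    have := map_zpow (MulAut.conj x) (x * y) j
    simpa [MulAut.conj_apply] using this
  have h2 : x * (x * y) ^ j * x⁻¹ = (x * y) ^ (-j) := by
    rw [h1, hconj, ← zpow_neg_one, ← zpow_mul, neg_one_mul]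
  calc x * (x * y) ^ j = (x * (x * y) ^ j * x⁻¹) * x := by group
    _ = (x * y) ^ (-j) * x := by rw [h2]

theorem dihedral_norm (hx : x * x = 1) (hy : y * y = 1) :
    ∀ F : List G, (∀ f ∈ F, f = x ∨ f = y) →
      ∃ j : ℤ, F.prod = (x * y) ^ j ∨ F.prod = (x * y) ^ j * x := by
  intro F hF
  induction F with
  | nil => exact ⟨0, Or.inl (by simp)⟩
  | cons f F ih =>
    obtain ⟨j, hj⟩ := ih fun g hg => hF g (List.mem_cons_of_mem f hg)
    rw [List.prod_cons]
    rcases hF f List.mem_cons_self with hf | hf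
    · rcases hj with hj | hj
      · exact ⟨-j, Or.inr (by rw [hf, hj, invol_conj_zpow hx hy])⟩
      · refine ⟨-j, Or.inl ?_⟩
        rw [hf, hj, ← mul_assoc, invol_conj_zpow hx hy, mul_assoc, hx, mul_one]
    · have hyx2 : ∀ z : G, y * z = x * ((x * y) * z) := by
        intro z
        rw [← mul_assoc, ← mul_assoc, hx, one_mul]
      rcases hj with hj | hj
      · refine ⟨-(1 + j), Or.inr ?_⟩
        rw [hf, hj, hyx2, ← zpow_one_add, invol_conj_zpow hx hy]
      · refine ⟨-(1 + j), Or.inl ?_⟩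
        rw [hf, hj, ← mul_assoc, hyx2, ← zpow_one_add, invol_conj_zpow hx hy,
          mul_assoc, hx, mul_one]

theorem pow4_eq (a : G) : a ^ (4 : ℕ) = (a * a) * (a * a) := by
  rw [show (4:ℕ) = 2 * 2 from rfl, pow_mul, pow_two, pow_two]

theorem dihedral_pow4 (hx : x * x = 1) (hy : y * y = 1)
    (ht : ((x * y) * (x * y)) * ((x * y) * (x * y)) = 1)
    (F : List G) (hF : ∀ f ∈ F, f = x ∨ f = y) : F.prod ^ (4 : ℕ) = 1 := by
  have ht4 : (x * y) ^ (4 : ℕ) = 1 := by rw [pow4_eq]; exact ht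
  obtain ⟨j, hj | hj⟩ := dihedral_norm hx hy F hF
  · rw [hj]
    have h : ((x * y) ^ j) ^ (4 : ℕ) = ((x * y) ^ (4 : ℕ)) ^ j := by
      rw [← zpow_natCast ((x * y) ^ j) 4, ← zpow_mul, ← zpow_natCast (x * y) 4, ← zpow_mul,
        mul_comm]
    rw [h, ht4, one_zpow]
  · have h2 : F.prod * F.prod = 1 := by
      rw [hj, show ((x*y)^j * x) * ((x*y)^j * x) = (x*y)^j * (x * (x*y)^j) * x from by group,
        invol_conj_zpow hx hy, show (x*y)^j * ((x*y)^(-j) * x) * x = (x*y)^j * (x*y)^(-j) * (x * x) from by group,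
        hx, mul_one, ← zpow_add, add_neg_cancel, zpow_zero]
    rw [pow4_eq, h2, one_mul]

end Dihedral

/- ### products of rooted elements -/

theorem prod_hA (F : List TA) (h : ∀ f ∈ F, ∃ u, f = hA u) : ∃ u, F.prod = hA u := by
  induction F with
  | nil => exact ⟨0, by rw [List.prod_nil, hA_zero]⟩
  | cons f F ih =>
    obtain ⟨u, hu⟩ := ih fun g hg => h g (List.mem_cons_of_mem f hg)
    obtain ⟨t, ht⟩ := h f List.mem_cons_self
    exact ⟨t + u, by rw [List.prod_cons, ht, hu, hA_mul]⟩

/- ### the fourth-power computations -/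

theorem root_w_hA_sq (s : V) : root ((wAut * hA s) * (wAut * hA s)) = 1 := by
  rw [root_mul, root_mul, root_w, one_mul, root_hA, addLeft_mul, add_self_V, addLeft_zero']

theorem sec_w_hA_sq (s x : V) :
    sec ((wAut * hA s) * (wAut * hA s)) x = secw x * secw (s + x) := by
  rw [sec_mul'']
  have hsec : ∀ z, sec (wAut * hA s) z = secw (s + z) := by
    intro z
    rw [sec_mul'', sec_hA, mul_one, root_hA_apply, sec_wAut]
  have hroot : ∀ z, root (wAut * hA s) z = s + z := by
    intro z
    rw [root_mul, root_w, one_mul, root_hA_apply]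
  rw [hsec, hsec, hroot]
  rw [show s + (s + x) = x from by rw [← add_assoc, add_self_V, zero_add]]

theorem sval_zero_of_unit : ∀ s : V,
    (s = (1,0,0) ∨ s = (0,1,0) ∨ s = (0,0,1)) → sval s = 0 := by decide

theorem w_hA_pow4 (s : V) (hs : s = (1,0,0) ∨ s = (0,1,0) ∨ s = (0,0,1)) :
    ((wAut * hA s) * (wAut * hA s)) * ((wAut * hA s) * (wAut * hA s)) = 1 := by
  have hs0 : sval s = 0 := sval_zero_of_unit s hs
  have hsne : s ≠ 0 := by rcases hs with rfl | rfl | rfl <;> decide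
  apply eq_one_of_root_sec
  · rw [root_mul, root_w_hA_sq, one_mul]
  · intro x
    rw [sec_mul'', root_w_hA_sq, Equiv.Perm.one_apply, sec_w_hA_sq]
    by_cases hx0 : x = 0
    · subst hx0
      rw [add_zero, secw_zero, secw_ne s hsne, hs0, hA_zero, mul_one, w_sq]
    · by_cases hxs : s + x = 0
      · obtain rfl : x = s := eq_of_add_eq_zero_V s x hxs
        rw [hxs, secw_zero, secw_ne x hsne, hs0, hA_zero, one_mul, w_sq]
      · rw [secw_ne x hx0, secw_ne _ hxs, hA_mul, hA_mul, add_self_V, hA_zero]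

theorem w_secw_pow4 (h : V) :
    ((wAut * secw h) * (wAut * secw h)) * ((wAut * secw h) * (wAut * secw h)) = 1 := by
  by_cases h0 : h = 0
  · rw [h0, secw_zero, w_sq]
    exact one_mul 1
  · rw [secw_ne h h0]
    have : sval h = 0 ∨ (sval h = (1,0,0) ∨ sval h = (0,1,0) ∨ sval h = (0,0,1)) := by
      revert h; decide
    rcases this with hsv | hsv
    · rw [hsv, hA_zero, mul_one, w_sq, one_mul]
    · exact w_hA_pow4 _ hsv

/- ### products supported on a coset pair `{p, p + h}` have order dividing 4 -/

theorem bad_prod_pow4 (p h : V) (F : List TA)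
    (hF : ∀ f ∈ F, f = secw p ∨ f = secw (p + h)) : F.prod ^ (4 : ℕ) = 1 := by
  by_cases hp : p = 0
  · subst hp
    rw [zero_add] at hF
    rw [secw_zero] at hF
    exact dihedral_pow4 w_sq (secw_sq h) (w_secw_pow4 h) F hF
  · by_cases hq : p + h = 0
    · rw [hq, secw_zero] at hF
      refine dihedral_pow4 w_sq (secw_sq p) ?_ F (fun f hf => (hF f hf).symm)
      have hhp : secw h = secw p := by
        obtain rfl : h = p := eq_of_add_eq_zero_V p h hq
        rfl
      rw [← hhp]; exact w_secw_pow4 h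
    · obtain ⟨u, hu⟩ := prod_hA F (by
        intro f hf
        rcases hF f hf with rfl | rfl
        · exact ⟨sval p, secw_ne p hp⟩
        · exact ⟨sval (p + h), secw_ne _ hq⟩)
      rw [hu, pow4_eq, hA_sq, one_mul]

/- ### normal form for sections of `W L` -/

theorem sec_W_normal (L : List V) (x : V) :
    ∃ h' L', sec (W L) x = hA h' * W L' ∧ L'.length = L.count x := by
  induction L with
  | nil => exact ⟨0, [], by rw [W_nil, sec_one, hA_zero, mul_one], by simp⟩
  | cons k L ih =>
    obtain ⟨h', L', he, hl⟩ := ih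
    have hsw : sec (W (k :: L)) x = secw (k + x) * sec (W L) x := by
      rw [W_cons, sec_mul'', root_W, Equiv.Perm.one_apply, sec_wk]
    rw [List.count_cons]
    by_cases hk : k = x
    · refine ⟨h', h' :: L', ?_, ?_⟩
      · rw [hsw, he, hk, add_self_V, secw_zero, w_mul_hA_W]
      · simp only [beq_iff_eq, if_pos hk, List.length_cons, hl]
    · refine ⟨sval (k + x) + h', L', ?_, ?_⟩
      · have hkx : k + x ≠ 0 := fun e => hk (eq_of_add_eq_zero_V k x e).symm
        rw [hsw, he, secw_ne _ hkx, ← mul_assoc, hA_mul]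
      · simp only [beq_iff_eq, if_neg hk, hl, Nat.add_zero]

/- ### the main induction -/

theorem W_const : ∀ (L : List V) (x₀ : V), (∀ k ∈ L, k = x₀) → W L = wk x₀ ^ L.length
  | [], _, _ => by rw [W_nil, List.length_nil, pow_zero]
  | k :: L, x₀, hc => by
    rw [W_cons, hc k List.mem_cons_self,
      W_const L x₀ (fun k hk => hc k (List.mem_cons_of_mem _ hk)), List.length_cons, pow_succ']

theorem main : ∀ (m : ℕ) (L : List V), L.length ≤ m → ∀ h : V,
    ∃ n : ℕ, (hA h * W L) ^ 2 ^ n = 1 := by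
  intro m
  induction m with
  | zero =>
    intro L hL h
    obtain rfl : L = [] := List.eq_nil_of_length_eq_zero (Nat.le_zero.1 hL)
    refine ⟨1, ?_⟩
    rw [W_nil, mul_one, show (2:ℕ)^1 = 2 from rfl, pow_two, hA_sq]
  | succ m ih =>
    intro L hL h
    by_cases hh : h = 0
    · subst hh
      rw [hA_zero, one_mul]
      by_cases hc : ∃ x₀, ∀ k ∈ L, k = x₀
      · obtain ⟨x₀, hx₀⟩ := hc
        refine ⟨1, ?_⟩
        rw [W_const L x₀ hx₀, show (2:ℕ)^1 = 2 from rfl, ← pow_mul, mul_comm, pow_mul,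
          pow_two, wk_sq, one_pow]
      · push_neg at hc
        apply torsion_of_sections _ (root_W L)
        intro x
        obtain ⟨h', L', he, hl⟩ := sec_W_normal L x
        rw [he]
        apply ih L' ?_ h'
        have h1 : L.count x < L.length := count_lt_of_exists_ne (hc x)
        omega
    · apply torsion_of_sq
      have hgg : (hA h * W L) * (hA h * W L) = W (L.map (· + h) ++ L) := by
        rw [show (hA h * W L) * (hA h * W L) = (hA h * W L * hA h) * W L from by group,
          conj_W, W_append]
      rw [hgg]
      by_cases hb : ∃ x₀, ∀ k ∈ L, k = x₀ ∨ k = x₀ + h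
      · obtain ⟨x₀, hx₀⟩ := hb
        apply torsion_of_sections _ (root_W _)
        intro x
        refine ⟨2, ?_⟩
        rw [sec_W, show (2:ℕ)^2 = 4 from rfl]
        apply bad_prod_pow4 (x₀ + x) h
        intro f hf
        rw [List.mem_map] at hf
        obtain ⟨k, hk, rfl⟩ := hf
        have hk2 : k = x₀ ∨ k = x₀ + h := by
          rcases List.mem_append.1 hk with hk | hk
          · rw [List.mem_map] at hk
            obtain ⟨k', hk', rfl⟩ := hk
            rcases hx₀ k' hk' with rfl | rfl
            · exact Or.inr rfl
            · exact Or.inl (add_cancel_V x₀ h)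
          · exact hx₀ k hk
        rcases hk2 with rfl | rfl
        · exact Or.inl rfl
        · refine Or.inr ?_
          rw [add_shuffle_V]
      · push_neg at hb
        apply torsion_of_sections _ (root_W _)
        intro x
        obtain ⟨h', L', he, hl⟩ := sec_W_normal (L.map (· + h) ++ L) x
        rw [he]
        apply ih L' ?_ h'
        rw [hl, List.count_append, count_map_add]
        have hxx : (x + h) ≠ x := fun e => hh (add_eq_self_V h x e)
        obtain ⟨k, hk, hk1, hk2⟩ := hb x
        have h2 : L.count (x + h) + L.count x < L.length :=
          count_pair_lt hxx ⟨k, hk, hk2, hk1⟩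
        omega

/- ### every element of the closure has the normal form `hA h * W L` -/

theorem key_mul (p q r s : TA) :
    (p * q) * ((q * r * q) * s) = p * ((q * q) * (r * (q * s))) := by group

theorem key_inv (p r : TA) : p * (p * r * p) = (p * p) * (r * p) := by group

theorem normal_form : ∀ g ∈ (Subgroup.closure {wAut, aAut, bAut, cAut} : Subgroup TA),
    ∃ (h : V) (L : List V), g = hA h * W L := by
  intro g hg
  induction hg using Subgroup.closure_induction with
  | mem x hx =>
    simp only [Set.mem_insert_iff, Set.mem_singleton_iff] at hx
    rcases hx with rfl | rfl | rfl | rfl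
    · exact ⟨0, [0], by rw [hA_zero, one_mul, W_cons, W_nil, mul_one, wk_zero]⟩
    · exact ⟨(1,0,0), [], by rw [W_nil, mul_one]; rfl⟩
    · exact ⟨(0,1,0), [], by rw [W_nil, mul_one]; rfl⟩
    · exact ⟨(0,0,1), [], by rw [W_nil, mul_one]; rfl⟩
  | one => exact ⟨0, [], by rw [hA_zero, W_nil, mul_one]⟩
  | mul a b ha hb iha ihb =>
    obtain ⟨h, L, rfl⟩ := iha
    obtain ⟨h', L', rfl⟩ := ihb
    refine ⟨h + h', L.map (· + h') ++ L', ?_⟩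
    rw [← hA_mul, W_append, ← conj_W, key_mul (hA h) (hA h') (W L) (W L'), hA_sq, one_mul]
    group
  | inv a ha iha =>
    obtain ⟨h, L, rfl⟩ := iha
    refine ⟨h, (L.reverse).map (· + h), ?_⟩
    rw [mul_inv_rev, hA_inv, W_inv, ← conj_W, key_inv (hA h) (W L.reverse), hA_sq, one_mul]

theorem torsion : ∀ g ∈ (Subgroup.closure {wAut, aAut, bAut, cAut} : Subgroup TA),
    ∃ n : ℕ, g ^ 2 ^ n = 1 := by
  intro g hg
  obtain ⟨h, L, rfl⟩ := normal_form g hg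
  exact main L.length L le_rfl h

end TorsionProof

end DicePaper

open DicePaper in
/-- the tetrahedron group `G = ⟨w, a, b, c⟩` is a 2-group: every element
has order a power of 2. -/
theorem stmt13 :
    ∀ g ∈ (Subgroup.closure {wAut, aAut, bAut, cAut} : Subgroup (TreeAut fun _ => V)),
      ∃ n : ℕ, g ^ 2 ^ n = 1 :=
  DicePaper.TorsionProof.torsion
end

section
/- Assume that the dice roll is lucky (condition D holds) at infinitely many steps i ∈ ℕ. Then the dice group G = ⟨w₁, A₁⟩ is periodic, and moreover every g ∈ G has finite order all of whose prime divisors belong to P. -/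
universe u

namespace DicePaper

section Dice

variable (p N : ℕ → ℕ)

/-- The elementary abelian group `H_{k+1} = C_{p_{k+1}}^{N_{k+1}}` (0-indexed). -/
abbrev Hgrp (k : ℕ) : Type := Fin (N k) → ZMod (p k)

variable (y : ∀ k, Fin (N (k + 1)) → Hgrp p N k)

/-- The portrait of the directed automorphism `w₁`: its nontrivial sections occur
only along the path `1_1 1_2 1_3 ⋯`; the section at `1_1 ⋯ 1_{k}` is `w_{k+1}`, and the
section of `w_k` at a defining point `y_{k,j} ∈ Y_k` is the rooted automorphism `a_{k+1,j}`. -/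
noncomputable def wPort : ∀ (p N : ℕ → ℕ) (y : ∀ k, Fin (N (k + 1)) → Hgrp p N k)
    (n : ℕ), Word (fun k => Hgrp p N k) n → Equiv.Perm (Hgrp p N n)
  | _, _, _, 0, _ => 1
  | p, N, y, n + 1, v =>
    if v.1 = 0 then
      wPort (fun k => p (k + 1)) (fun k => N (k + 1)) (fun k => y (k + 1)) n v.2
    else
      match n, v with
      | 0, v =>
        if h : ∃ j, y 0 j = v.1 then
          Equiv.addLeft (Pi.single h.choose (1 : ZMod (p 1)))
        else 1
      | _ + 1, _ => 1

/-- The directed automorphism `w₁` of the spherically homogeneous tree `T`. -/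
noncomputable def wDice : TreeAut fun k => Hgrp p N k := wPort p N y

/-- The rooted automorphism given by the basis element `a_{1,j} ∈ A₁` of `H₁`,
translating the first letter of every word. -/
def rootedDice (j : Fin (N 0)) : TreeAut fun k => Hgrp p N k :=
  fun n _ => match n with
  | 0 => Equiv.addLeft (Pi.single j (1 : ZMod (p 0)))
  | _ + 1 => 1

/-- The dice group `G = ⟨w₁, A₁⟩ ≤ Aut T`. -/
noncomputable def diceGroup : Subgroup (TreeAut fun k => Hgrp p N k) :=
  Subgroup.closure ({wDice p N y} ∪ Set.range (rootedDice p N))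

/-- The face `Π_{k+2}` of the cube `H_{k+2}` spanned by the basis vectors
`a_{k+2,j}`, `j ∈ Z`. -/
def face (k : ℕ) (Z : Set (Fin (N (k + 1)))) : AddSubgroup (Hgrp p N (k + 1)) :=
  AddSubgroup.closure {v | ∃ j ∈ Z, v = Pi.single j (1 : ZMod (p (k + 1)))}

/-- One step of the recursion in condition D: from `Z_m ⊆ Y_m` (recorded by indices)
pass to `Z_{m+1} = Y_{m+1} ∩ Π_{m+1}`. -/
def Znext (k : ℕ) (Z : Set (Fin (N (k + 1)))) : Set (Fin (N (k + 2))) :=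
  {j | y (k + 1) j ∈ face p N (k) Z}

/-- The recursion of condition D started at level `i` with the line
`l = ⟨x⟩` through `1_i`: `Z_i = Y_i ∩ l`, `Z_{m+1} = Y_{m+1} ∩ Π_{m+1}`. -/
def Zfam (i : ℕ) (x : Hgrp p N i) : ∀ m : ℕ, Set (Fin (N (i + m + 1)))
  | 0 => {j | y i j ∈ AddSubgroup.zmultiples x}
  | m + 1 => Znext p N y (i + m) (Zfam i x m)

/-- Condition D (lucky dice roll at step `i`): for every line through `1_i` in `H_i`
the recursion `Z_i, Z_{i+1}, Z_{i+2}, …` terminates, i.e. reaches the empty set. -/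
def LuckyD (i : ℕ) : Prop :=
  ∀ x : Hgrp p N i, x ≠ 0 → ∃ m : ℕ, Zfam p N y i x m = ∅

/-- Condition DDmin at step `i`: every line through `1_i` in `H_i` contains at most one
defining point of `Y_i`, and no axis `⟨a_{i+1,j}⟩` of `H_{i+1}` contains a point of `Y_{i+1}`. -/
def DDmin (i : ℕ) : Prop :=
  (∀ x : Hgrp p N i, x ≠ 0 → {j | y i j ∈ AddSubgroup.zmultiples x}.Subsingleton) ∧
  (∀ j : Fin (N (i + 1)), ∀ j' : Fin (N (i + 2)),
    y (i + 1) j' ∉ AddSubgroup.zmultiples (Pi.single j (1 : ZMod (p (i + 1)))))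

end Dice

namespace Aux

open TreeAut

variable {X : ℕ → Type u}

/-- The root permutation, as a homomorphism. -/
def pi : TreeAut X →* Equiv.Perm (X 0) where
  toFun f := f 0 PUnit.unit
  map_one' := rfl
  map_mul' _ _ := rfl

theorem ext_of (f : TreeAut X) (h0 : pi f = 1) (hs : ∀ x, sec f x = 1) : f = 1 := by
  funext n v
  cases n with
  | zero => cases v; exact h0
  | succ n => exact congrFun (congrFun (hs v.1) n) v.2

theorem sec_one (x : X 0) : sec (1 : TreeAut X) x = 1 := rfl

/-- The section at `x`, as a homomorphism on the level stabilizer. -/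
def secM (x : X 0) : (pi (X := X)).ker →* TreeAut (fun k => X (k + 1)) where
  toFun f := sec f.1 x
  map_one' := rfl
  map_mul' f g := by
    show sec (f.1 * g.1) x = sec f.1 x * sec g.1 x
    rw [sec_mul]
    have hg : (g.1 0 PUnit.unit : Equiv.Perm (X 0)) = 1 := g.2
    rw [hg]
    rfl

theorem sec_pow {f : TreeAut X} (hf : pi f = 1) (k : ℕ) (x : X 0) :
    sec (f ^ k) x = (sec f x) ^ k := by
  have hm : f ∈ (pi (X := X)).ker := hf
  have h1 : ((⟨f, hm⟩ : (pi (X := X)).ker) ^ k : (pi (X := X)).ker).1 = f ^ k := rfl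
  calc sec (f ^ k) x = secM x ((⟨f, hm⟩ : (pi (X := X)).ker) ^ k) := by
        show sec (f ^ k) x = sec (((⟨f, hm⟩ : (pi (X := X)).ker) ^ k :
          (pi (X := X)).ker).1) x
        rw [h1]
    _ = (secM x ⟨f, hm⟩) ^ k := map_pow _ _ _
    _ = (sec f x) ^ k := rfl

theorem sec_zpow {f : TreeAut X} (hf : pi f = 1) (k : ℤ) (x : X 0) :
    sec (f ^ k) x = (sec f x) ^ k := by
  have hm : f ∈ (pi (X := X)).ker := hf
  have h1 : ((⟨f, hm⟩ : (pi (X := X)).ker) ^ k : (pi (X := X)).ker).1 = f ^ k := rfl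
  calc sec (f ^ k) x = secM x ((⟨f, hm⟩ : (pi (X := X)).ker) ^ k) := by
        show sec (f ^ k) x = sec (((⟨f, hm⟩ : (pi (X := X)).ker) ^ k :
          (pi (X := X)).ker).1) x
        rw [h1]
    _ = (secM x ⟨f, hm⟩) ^ k := map_zpow _ _ _
    _ = (sec f x) ^ k := rfl

section Rooted

variable [AddGroup (X 0)]

/-- The rooted automorphism translating the first letter by `u`. -/
def rooted (u : X 0) : TreeAut X := fun n _ =>
  match n with
  | 0 => Equiv.addLeft u
  | _ + 1 => 1

theorem pi_rooted (u : X 0) : pi (rooted u) = Equiv.addLeft u := rfl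

theorem sec_rooted (u : X 0) (x : X 0) : sec (rooted (X := X) u) x = 1 := rfl

theorem rooted_zero : rooted (X := X) 0 = 1 := by
  funext n v
  cases n with
  | zero => exact Equiv.ext fun z => zero_add z
  | succ n => rfl

theorem rooted_add (u v : X 0) : rooted (X := X) (u + v) = rooted u * rooted v := by
  funext n w
  cases n with
  | zero =>
    show Equiv.addLeft (u + v) = Equiv.addLeft u * Equiv.addLeft v
    exact Equiv.ext fun z => add_assoc u v z
  | succ n => show (1 : Equiv.Perm (X (n+1))) = 1 * 1; rw [mul_one]

/-- `rooted` as a homomorphism. -/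
def rootedM : Multiplicative (X 0) →* TreeAut X where
  toFun u := rooted u.toAdd
  map_one' := rooted_zero
  map_mul' a b := rooted_add _ _

theorem rooted_zpow (u : X 0) (e : ℤ) : (rooted (X := X) u) ^ e = rooted (e • u) := by
  have : (rooted (X := X) u) = rootedM (Multiplicative.ofAdd u) := rfl
  rw [this, ← map_zpow, ← ofAdd_zsmul]
  rfl

theorem rooted_pow (u : X 0) (k : ℕ) : (rooted (X := X) u) ^ k = rooted (k • u) := by
  have h := rooted_zpow u (k : ℤ)
  rw [zpow_natCast, natCast_zsmul] at h
  exact h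

theorem rooted_inv (u : X 0) : (rooted (X := X) u)⁻¹ = rooted (-u) := by
  have h := rooted_zpow u (-1)
  rw [zpow_neg_one, neg_one_zsmul] at h
  exact h

end Rooted

section Dice2

open TreeAut

/-- Bundled dice data. -/
structure DDat where
  p : ℕ → ℕ
  N : ℕ → ℕ
  y : ∀ k, Fin (N (k + 1)) → Hgrp p N k

abbrev DDat.Xf (D : DDat) : ℕ → Type := fun k => Hgrp D.p D.N k
abbrev DDat.H (D : DDat) : Type := Hgrp D.p D.N 0

/-- Shift the data by one level. -/
def DDat.shift (D : DDat) : DDat :=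
  ⟨fun k => D.p (k + 1), fun k => D.N (k + 1), fun k => D.y (k + 1)⟩

noncomputable def DDat.w (D : DDat) : TreeAut D.Xf := wDice D.p D.N D.y

theorem pi_w (D : DDat) : pi D.w = 1 := rfl

theorem addLeft_zero' {A : Type} [AddGroup A] : Equiv.addLeft (0 : A) = 1 :=
  Equiv.ext fun z => zero_add z

theorem addLeft_add' {A : Type} [AddGroup A] (a b : A) :
    Equiv.addLeft (a + b) = Equiv.addLeft a * Equiv.addLeft b :=
  Equiv.ext fun z => add_assoc a b z

theorem addLeft_pow' {A : Type} [AddGroup A] (a : A) (k : ℕ) :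
    (Equiv.addLeft a) ^ k = Equiv.addLeft (k • a) := by
  induction k with
  | zero => rw [pow_zero, zero_smul, addLeft_zero']
  | succ k ih => rw [pow_succ, ih, succ_nsmul, addLeft_add']

theorem sec_w (D : DDat) (x : D.H) :
    sec D.w x = if x = 0 then D.shift.w
      else if h : ∃ j, D.y 0 j = x then
        rooted (X := D.shift.Xf) (Pi.single h.choose (1 : ZMod (D.p 1))) else 1 := by
  funext n v
  show wPort D.p D.N D.y (n + 1) (x, v) = _
  erw [wPort.eq_def]
  dsimp only
  by_cases hx : x = 0
  · rw [if_pos hx, if_pos hx]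
    rfl
  · rw [if_neg hx, if_neg hx]
    by_cases h : ∃ j, D.y 0 j = x
    · rw [dif_pos h]
      cases n with
      | zero =>
        dsimp only
        rw [dif_pos h]
        rfl
      | succ n => rfl
    · rw [dif_neg h]
      cases n with
      | zero =>
        dsimp only
        rw [dif_neg h]
        rfl
      | succ n => rfl

noncomputable def conjW (D : DDat) (v : D.H) (e : ℤ) : TreeAut D.Xf :=
  (rooted v)⁻¹ * D.w ^ e * rooted v

theorem conjW_zero (D : DDat) (e : ℤ) : conjW D 0 e = D.w ^ e := by
  rw [conjW, rooted_zero, inv_one, one_mul, mul_one]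

theorem pi_conjW (D : DDat) (v : D.H) (e : ℤ) : pi (conjW D v e) = 1 := by
  rw [conjW, map_mul, map_mul, map_inv, map_zpow, pi_w, one_zpow, mul_one,
    inv_mul_cancel]

abbrev EE (D : DDat) : Type := D.H ⊕ (D.H × ℤ)

noncomputable def mfac (D : DDat) : EE D → TreeAut D.Xf :=
  Sum.elim (fun r => rooted r) fun ve => conjW D ve.1 ve.2

noncomputable def eval (D : DDat) (l : List (EE D)) : TreeAut D.Xf :=
  (l.map (mfac D)).prod

theorem eval_nil (D : DDat) : eval D [] = 1 := rfl

theorem eval_cons (D : DDat) (a : EE D) (t : List (EE D)) :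
    eval D (a :: t) = mfac D a * eval D t := by
  rw [eval, List.map_cons, List.prod_cons]; rfl

theorem eval_append (D : DDat) (l₁ l₂ : List (EE D)) :
    eval D (l₁ ++ l₂) = eval D l₁ * eval D l₂ := by
  rw [eval, List.map_append, List.prod_append]; rfl

def tau (D : DDat) : List (EE D) → D.H
  | [] => 0
  | (Sum.inl r) :: t => r + tau D t
  | (Sum.inr _) :: t => tau D t

theorem pi_eval (D : DDat) (l : List (EE D)) :
    pi (eval D l) = Equiv.addLeft (tau D l) := by
  induction l with
  | nil => rw [eval_nil, map_one, tau, addLeft_zero']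
  | cons a t ih =>
    cases a with
    | inl r => rw [eval_cons, map_mul, ih, tau, addLeft_add']; rfl
    | inr ve => rw [eval_cons, map_mul, ih, tau]; show pi (conjW D ve.1 ve.2) * _ = _;
                rw [pi_conjW, one_mul]

theorem pi_eval_apply (D : DDat) (l : List (EE D)) (x : D.H) :
    (eval D l) 0 PUnit.unit x = tau D l + x := by
  have h := pi_eval D l
  exact congrFun (congrArg (fun (q : Equiv.Perm D.H) => (q : D.H → D.H)) h) x

noncomputable def secEntry (D : DDat) (pt : D.H) : EE D → EE D.shift
  | Sum.inl _ => Sum.inl 0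
  | Sum.inr (v, e) =>
    if v + pt = 0 then Sum.inr (0, e)
    else if h : ∃ j, D.y 0 j = v + pt then
      Sum.inl (e • Pi.single h.choose (1 : ZMod (D.p 1))) else Sum.inl 0

noncomputable def secListD (D : DDat) : List (EE D) → D.H → List (EE D.shift)
  | [], _ => []
  | a :: t, x => secEntry D (tau D t + x) a :: secListD D t x

theorem sec_mfac (D : DDat) (a : EE D) (pt : D.H) :
    sec (mfac D a) pt = mfac D.shift (secEntry D pt a) := by
  cases a with
  | inl r =>
    show sec (rooted r) pt = mfac D.shift (Sum.inl 0)
    rw [sec_rooted]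
    show (1 : TreeAut D.shift.Xf) = rooted 0
    rw [rooted_zero]
  | inr ve =>
    obtain ⟨v, e⟩ := ve
    show sec (conjW D v e) pt = _
    rw [conjW, mul_assoc, sec_mul, sec_mul]
    have h1 : (rooted (X := D.Xf) v)⁻¹ = rooted (-v) := rooted_inv v
    have h2 : ((D.w ^ e * rooted v) 0 PUnit.unit) pt = v + pt := by
      have : pi (D.w ^ e * rooted v) = Equiv.addLeft v := by
        rw [map_mul, map_zpow, pi_w, one_zpow, one_mul, pi_rooted]
      exact congrFun (congrArg (fun (q : Equiv.Perm D.H) => (q : D.H → D.H)) this) pt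
    rw [h2, h1, sec_rooted, one_mul]
    have h3 : ((rooted (X := D.Xf) v) 0 PUnit.unit) pt = v + pt := rfl
    rw [h3, sec_rooted, mul_one, sec_zpow (pi_w D), sec_w]
    have hse : secEntry D pt (Sum.inr (v, e)) = if v + pt = 0 then Sum.inr (0, e)
        else if h : ∃ j, D.y 0 j = v + pt then
          Sum.inl (e • Pi.single h.choose (1 : ZMod (D.p 1))) else Sum.inl 0 := rfl
    rw [hse]
    by_cases hz : v + pt = 0
    · rw [if_pos hz, if_pos hz]
      show D.shift.w ^ e = mfac D.shift (Sum.inr (0, e))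
      rw [show mfac D.shift (Sum.inr (0,e)) = conjW D.shift 0 e from rfl, conjW_zero]
    · rw [if_neg hz, if_neg hz]
      by_cases h : ∃ j, D.y 0 j = v + pt
      · rw [dif_pos h, dif_pos h]
        show (rooted _) ^ e = mfac D.shift (Sum.inl _)
        rw [rooted_zpow]
        rfl
      · rw [dif_neg h, dif_neg h]
        show (1 : TreeAut D.shift.Xf) ^ e = mfac D.shift (Sum.inl 0)
        rw [one_zpow]
        show (1 : TreeAut D.shift.Xf) = rooted 0
        rw [rooted_zero]

theorem sec_eval (D : DDat) (l : List (EE D)) (x : D.H) :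
    sec (eval D l) x = eval D.shift (secListD D l x) := by
  induction l with
  | nil => exact sec_one x
  | cons a t ih =>
    rw [eval_cons, sec_mul, pi_eval_apply, sec_mfac, ih, secListD, eval_cons]
    rfl

end Dice2

section Dice3

open TreeAut

variable (D : DDat)

def cntR (l : List (EE D)) : ℕ := l.countP (fun a => a.isRight)

theorem cntR_nil : cntR D [] = 0 := rfl

theorem cntR_cons_inl (r : D.H) (t : List (EE D)) :
    cntR D (Sum.inl r :: t) = cntR D t := by
  rw [cntR, List.countP_cons, cntR]; simp

theorem cntR_cons_inr (ve : D.H × ℤ) (t : List (EE D)) :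
    cntR D (Sum.inr ve :: t) = cntR D t + 1 := by
  rw [cntR, List.countP_cons, cntR]; simp

theorem cntR_append (l₁ l₂ : List (EE D)) :
    cntR D (l₁ ++ l₂) = cntR D l₁ + cntR D l₂ :=
  List.countP_append

noncomputable def spineCnt : List (EE D) → D.H → ℕ
  | [], _ => 0
  | (Sum.inl _) :: t, x => spineCnt t x
  | (Sum.inr (v, _)) :: t, x => (if x = -(v + tau D t) then 1 else 0) + spineCnt t x

theorem spineCnt_total [NeZero (D.p 0)] (l : List (EE D)) :
    ∑ x : D.H, spineCnt D l x = cntR D l := by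
  induction l with
  | nil => simp [spineCnt, cntR_nil]
  | cons a t ih =>
    cases a with
    | inl r => rw [cntR_cons_inl, ← ih]; rfl
    | inr ve =>
      obtain ⟨v, e⟩ := ve
      rw [cntR_cons_inr, ← ih]
      have he : ∀ x : D.H, spineCnt D (Sum.inr (v, e) :: t) x
          = (if x = -(v + tau D t) then 1 else 0) + spineCnt D t x := fun _ => rfl
      simp only [he]
      rw [Finset.sum_add_distrib]
      have h1 : (∑ x : D.H, if x = -(v + tau D t) then 1 else 0) = 1 := by
        rw [Finset.sum_ite_eq' Finset.univ (-(v + tau D t)) (fun _ => 1)]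
        simp
      rw [h1, add_comm]

def AllSpinesIn : List (EE D) → Set D.H → Prop
  | [], _ => True
  | (Sum.inl _) :: t, C => AllSpinesIn t C
  | (Sum.inr (v, _)) :: t, C => -(v + tau D t) ∈ C ∧ AllSpinesIn t C

theorem allSpines_iff (l : List (EE D)) (C : Set D.H) :
    AllSpinesIn D l C ↔ ∀ z, spineCnt D l z ≠ 0 → z ∈ C := by
  induction l with
  | nil =>
    constructor
    · intro _ z hz; exact absurd rfl hz
    · intro _; trivial
  | cons a t ih =>
    cases a with
    | inl r => exact ih
    | inr ve =>
      obtain ⟨v, e⟩ := ve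
      show (-(v + tau D t) ∈ C ∧ AllSpinesIn D t C) ↔ _
      constructor
      · rintro ⟨hs, ht⟩ z hz
        by_cases hzx : z = -(v + tau D t)
        · rw [hzx]; exact hs
        · apply ih.mp ht z
          have hz' : (if z = -(v + tau D t) then 1 else 0) + spineCnt D t z ≠ 0 := hz
          rw [if_neg hzx, zero_add] at hz'
          exact hz'
      · intro hall
        constructor
        · apply hall
          show (if -(v + tau D t) = -(v + tau D t) then 1 else 0) + _ ≠ 0
          rw [if_pos rfl]
          omega
        · apply ih.mpr
          intro z hz
          apply hall z
          show (if z = -(v + tau D t) then 1 else 0) + spineCnt D t z ≠ 0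
          omega

theorem secEntry_inr_eq (pt : D.H) (v : D.H) (e : ℤ) :
    secEntry D pt (Sum.inr (v, e)) = if v + pt = 0 then Sum.inr (0, e)
      else if h : ∃ j, D.y 0 j = v + pt then
        Sum.inl (e • Pi.single h.choose (1 : ZMod (D.p 1))) else Sum.inl 0 := rfl

theorem cntR_secList (l : List (EE D)) (x : D.H) :
    cntR D.shift (secListD D l x) = spineCnt D l x := by
  induction l with
  | nil => rfl
  | cons a t ih =>
    cases a with
    | inl r =>
      show cntR D.shift (Sum.inl 0 :: secListD D t x) = spineCnt D t x
      rw [cntR_cons_inl, ih]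
    | inr ve =>
      obtain ⟨v, e⟩ := ve
      show cntR D.shift (secEntry D (tau D t + x) (Sum.inr (v, e)) :: secListD D t x)
        = (if x = -(v + tau D t) then 1 else 0) + spineCnt D t x
      rw [secEntry_inr_eq]
      have hiff : v + (tau D t + x) = 0 ↔ x = -(v + tau D t) := by
        rw [← add_assoc]
        constructor
        · intro h; exact eq_neg_of_add_eq_zero_right h
        · intro h; rw [h]; exact add_neg_cancel _
      by_cases hz : v + (tau D t + x) = 0
      · erw [if_pos hz, cntR_cons_inr, ih, if_pos (hiff.mp hz)]
        omega
      · rw [if_neg hz, if_neg fun h => hz (hiff.mpr h)]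
        by_cases h : ∃ j, D.y 0 j = v + (tau D t + x)
        · erw [dif_pos h, cntR_cons_inl, ih]; omega
        · erw [dif_neg h, cntR_cons_inl, ih]; omega

theorem secList_allLeft (l : List (EE D)) (C : Set D.H) (hC : AllSpinesIn D l C)
    (x : D.H) (hx : x ∉ C) : ∀ a ∈ secListD D l x, a.isLeft := by
  induction l with
  | nil => intro a ha; exact absurd ha List.not_mem_nil
  | cons a t ih =>
    cases a with
    | inl r =>
      intro b hb
      rcases List.mem_cons.mp hb with hb | hb
      · rw [hb]; rfl
      · exact ih hC b hb
    | inr ve =>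
      obtain ⟨v, e⟩ := ve
      obtain ⟨hs, ht⟩ := hC
      intro b hb
      rcases List.mem_cons.mp hb with hb | hb
      · rw [hb, secEntry_inr_eq]
        have hne : ¬(v + (tau D t + x) = 0) := by
          intro h0
          apply hx
          have : x = -(v + tau D t) := by
            rw [← add_assoc] at h0
            exact eq_neg_of_add_eq_zero_right h0
          rw [this]; exact hs
        rw [if_neg hne]
        by_cases h : ∃ j, D.y 0 j = v + (tau D t + x)
        · rw [dif_pos h]; rfl
        · rw [dif_neg h]; rfl
      · exact ih ht b hb

def EntryOK (S : AddSubgroup D.H) : EE D → Prop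
  | Sum.inl r => r ∈ S
  | Sum.inr (v, _) => v ∈ S

/-- The face of the next-level cube spanned by the directions of defining points within `S`. -/
def faceT (S : AddSubgroup D.H) : AddSubgroup D.shift.H :=
  face D.p D.N 0 {j | D.y 0 j ∈ S}

theorem faceT_mono {S S' : AddSubgroup D.H} (h : S ≤ S') : faceT D S ≤ faceT D S' := by
  apply AddSubgroup.closure_mono
  rintro w ⟨j, hj, rfl⟩
  exact ⟨j, h hj, rfl⟩

theorem tau_mem (S : AddSubgroup D.H) (l : List (EE D))
    (h : ∀ a ∈ l, EntryOK D S a) : tau D l ∈ S := by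
  induction l with
  | nil => exact zero_mem S
  | cons a t ih =>
    cases a with
    | inl r =>
      show r + tau D t ∈ S
      exact add_mem (h _ List.mem_cons_self) (ih fun b hb => h b (List.mem_cons_of_mem _ hb))
    | inr ve => exact ih fun b hb => h b (List.mem_cons_of_mem _ hb)

theorem secList_entriesOK (L S : AddSubgroup D.H) (hLS : L ≤ S)
    (l : List (EE D)) (C : Set D.H) (hC : AllSpinesIn D l C)
    (x : D.H) (hx : ∀ s ∈ C, x - s ∈ L) :
    ∀ a ∈ secListD D l x, EntryOK D.shift (faceT D S) a := by
  induction l with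
  | nil => intro a ha; exact absurd ha List.not_mem_nil
  | cons a t ih =>
    cases a with
    | inl r =>
      intro b hb
      rcases List.mem_cons.mp hb with hb | hb
      · rw [hb]; exact zero_mem _
      · exact ih hC b hb
    | inr ve =>
      obtain ⟨v, e⟩ := ve
      obtain ⟨hs, ht⟩ := hC
      intro b hb
      rcases List.mem_cons.mp hb with hb | hb
      · rw [hb, secEntry_inr_eq]
        by_cases hz : v + (tau D t + x) = 0
        · rw [if_pos hz]; exact zero_mem _
        · rw [if_neg hz]
          by_cases h : ∃ j, D.y 0 j = v + (tau D t + x)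
          · rw [dif_pos h]
            show e • Pi.single h.choose (1 : ZMod (D.p 1)) ∈ faceT D S
            apply AddSubgroup.zsmul_mem
            apply AddSubgroup.subset_closure
            refine ⟨h.choose, ?_, rfl⟩
            show D.y 0 h.choose ∈ S
            rw [h.choose_spec]
            have hpt : v + (tau D t + x) = x - -(v + tau D t) := by abel
            rw [hpt]
            exact hLS (hx _ hs)
          · rw [dif_neg h]; exact zero_mem _
      · exact ih ht b hb

theorem secList_pure (l : List (EE D)) (x : D.H) (hC : AllSpinesIn D l {x}) :
    ∀ a ∈ secListD D l x, a = Sum.inl 0 ∨ ∃ e, a = Sum.inr ((0 : D.shift.H), e) := by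
  induction l with
  | nil => intro a ha; exact absurd ha List.not_mem_nil
  | cons a t ih =>
    cases a with
    | inl r =>
      intro b hb
      rcases List.mem_cons.mp hb with hb | hb
      · exact Or.inl hb
      · exact ih hC b hb
    | inr ve =>
      obtain ⟨v, e⟩ := ve
      obtain ⟨hs, ht⟩ := hC
      intro b hb
      rcases List.mem_cons.mp hb with hb | hb
      · right
        refine ⟨e, ?_⟩
        rw [hb, secEntry_inr_eq]
        have hz : v + (tau D t + x) = 0 := by
          have hsx : -(v + tau D t) = x := hs
          rw [← hsx, ← add_assoc, add_neg_cancel]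
        rw [if_pos hz]
        rfl
      · exact ih ht b hb

theorem eval_allLeft (l : List (EE D)) (h : ∀ a ∈ l, a.isLeft) :
    eval D l = rooted (tau D l) := by
  induction l with
  | nil => rw [eval_nil, show tau D [] = 0 from rfl, rooted_zero]
  | cons a t ih =>
    cases a with
    | inl r =>
      rw [eval_cons, show tau D (Sum.inl r :: t) = r + tau D t from rfl, rooted_add,
        ih fun b hb => h b (List.mem_cons_of_mem _ hb)]
      rfl
    | inr ve => exact absurd (h _ List.mem_cons_self) (by simp)

theorem eval_pure (l : List (EE D))
    (h : ∀ a ∈ l, a = Sum.inl 0 ∨ ∃ e, a = Sum.inr ((0 : D.H), e)) :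
    ∃ E : ℤ, eval D l = D.w ^ E := by
  induction l with
  | nil => exact ⟨0, by rw [eval_nil, zpow_zero]⟩
  | cons a t ih =>
    obtain ⟨E, hE⟩ := ih fun b hb => h b (List.mem_cons_of_mem _ hb)
    rcases h a List.mem_cons_self with ha | ⟨e, ha⟩
    · refine ⟨E, ?_⟩
      rw [eval_cons, ha, hE]
      show rooted 0 * D.w ^ E = D.w ^ E
      rw [rooted_zero, one_mul]
    · refine ⟨e + E, ?_⟩
      rw [eval_cons, ha, hE]
      show conjW D 0 e * D.w ^ E = D.w ^ (e + E)
      rw [conjW_zero, zpow_add]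

noncomputable def powList (l : List (EE D)) (x : D.H) : ℕ → List (EE D.shift)
  | 0 => []
  | c + 1 => secListD D l ((c • tau D l) + x) ++ powList l x c

theorem sec_eval_pow (l : List (EE D)) (x : D.H) (k : ℕ) :
    sec ((eval D l) ^ k) x = eval D.shift (powList D l x k) := by
  induction k with
  | zero => rw [pow_zero]; exact sec_one x
  | succ k ih =>
    rw [pow_succ']
    rw [sec_mul]
    have hp : (((eval D l) ^ k) 0 PUnit.unit) x = (k • tau D l) + x := by
      have h1 : pi ((eval D l) ^ k) = Equiv.addLeft (k • tau D l) := by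
        rw [map_pow, pi_eval, addLeft_pow']
      exact congrFun (congrArg (fun (q : Equiv.Perm D.H) => (q : D.H → D.H)) h1) x
    rw [hp, sec_eval, ih, powList, eval_append]
    rfl

theorem cntR_powList (l : List (EE D)) (x : D.H) (k : ℕ) :
    cntR D.shift (powList D l x k)
      = ∑ c ∈ Finset.range k, spineCnt D l ((c • tau D l) + x) := by
  induction k with
  | zero => simp [powList, cntR_nil]
  | succ k ih =>
    rw [powList, cntR_append, cntR_secList, ih, Finset.sum_range_succ, add_comm]

theorem mem_powList (l : List (EE D)) (x : D.H) (k : ℕ) (a : EE D.shift)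
    (ha : a ∈ powList D l x k) : ∃ c : ℕ, a ∈ secListD D l ((c • tau D l) + x) := by
  induction k with
  | zero => exact absurd ha List.not_mem_nil
  | succ k ih =>
    rcases List.mem_append.mp ha with h | h
    · exact ⟨k, h⟩
    · exact ih h

end Dice3

section Dice4

open TreeAut

variable (P : Finset ℕ)

/-- All primes of the data belong to `P`. -/
def DOK (D : DDat) : Prop := ∀ i, D.p i ∈ P

theorem DOK.shift {P : Finset ℕ} {D : DDat} (h : DOK P D) : DOK P D.shift :=
  fun i => h (i + 1)

/-- Killed by a positive `P`-smooth exponent. -/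
def Killable {Xl : ℕ → Type} (g : TreeAut Xl) : Prop :=
  ∃ M : ℕ, 0 < M ∧ (∀ q : ℕ, q.Prime → q ∣ M → q ∈ P) ∧ g ^ M = 1

theorem lam_pos (hP : ∀ q ∈ P, q.Prime) : 0 < P.prod id :=
  Finset.prod_pos fun q hq => (hP q hq).pos

theorem lam_smooth (hP : ∀ q ∈ P, q.Prime) :
    ∀ q : ℕ, q.Prime → q ∣ P.prod id → q ∈ P := by
  intro q hq hdvd
  obtain ⟨i, hi, hdvd'⟩ := (Prime.dvd_finset_prod_iff hq.prime id).mp hdvd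
  have := (Nat.prime_dvd_prime_iff_eq hq (hP i hi)).mp hdvd'
  rwa [this]

theorem w_pow_lam_apply (hP : ∀ q ∈ P, q.Prime) : ∀ (n : ℕ) (D : DDat), DOK P D →
    ∀ v : Word D.Xf n, (D.w ^ P.prod id) n v = 1
  | 0, D, _, v => by
    cases v
    show pi (D.w ^ P.prod id) = 1
    rw [map_pow, pi_w, one_pow]
  | n + 1, D, hD, v => by
    obtain ⟨x, v'⟩ := v
    show sec (D.w ^ P.prod id) x n v' = 1
    rw [sec_pow (pi_w D), sec_w]
    by_cases hx : x = 0
    · rw [if_pos hx]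
      exact w_pow_lam_apply hP n D.shift (hD.shift) v'
    · rw [if_neg hx]
      by_cases h : ∃ j, D.y 0 j = x
      · erw [dif_pos h, rooted_pow]
        have hz : (P.prod id) • (Pi.single h.choose (1 : ZMod (D.p 1)) : D.shift.H) = 0 := by
          have hdvd : (D.p 1) ∣ P.prod id := Finset.dvd_prod_of_mem id (hD 1)
          have hc : ((P.prod id : ℕ) : ZMod (D.p 1)) = 0 :=
            (ZMod.natCast_eq_zero_iff _ _).mpr hdvd
          funext j'
          erw [Pi.smul_apply, nsmul_eq_mul, hc, zero_mul]
          rfl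
        rw [hz, rooted_zero]
        rfl
      · erw [dif_neg h, one_pow]; rfl

theorem w_pow_lam (hP : ∀ q ∈ P, q.Prime) (D : DDat) (hD : DOK P D) :
    D.w ^ P.prod id = 1 := by
  funext n v
  rw [w_pow_lam_apply P hP n D hD v]
  rfl

theorem kill_w_zpow (hP : ∀ q ∈ P, q.Prime) (D : DDat) (hD : DOK P D) (E : ℤ) :
    Killable P (D.w ^ E) := by
  refine ⟨P.prod id, lam_pos P hP, lam_smooth P hP, ?_⟩
  have h1 : (D.w ^ E) ^ (P.prod id) = (D.w ^ (P.prod id)) ^ E := by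
    rw [← zpow_natCast (D.w ^ E) (P.prod id), ← zpow_mul, mul_comm, zpow_mul, zpow_natCast]
  rw [h1, w_pow_lam P hP D hD, one_zpow]

theorem kill_rooted (hP : ∀ q ∈ P, q.Prime) (D : DDat) (hD : DOK P D) (u : D.H) :
    Killable P (rooted (X := D.Xf) u) := by
  have hpp := hP _ (hD 0)
  refine ⟨D.p 0, hpp.pos, ?_, ?_⟩
  · intro q hq hdvd
    rw [(Nat.prime_dvd_prime_iff_eq hq hpp).mp hdvd]
    exact hD 0
  · rw [rooted_pow]
    have hz : (D.p 0) • u = 0 := by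
      funext j'
      rw [Pi.smul_apply, nsmul_eq_mul, ZMod.natCast_self, zero_mul]
      rfl
    rw [hz, rooted_zero]

theorem kill_of_sections (D : DDat) [NeZero (D.p 0)] (g : TreeAut D.Xf)
    (hpi : pi g = 1) (hs : ∀ x : D.H, Killable P (sec g x)) : Killable P g := by
  classical
  choose M hpos hsm hkill using hs
  refine ⟨∏ x : D.H, M x, Finset.prod_pos fun x _ => hpos x, ?_, ?_⟩
  · intro q hq hdvd
    obtain ⟨x, _, hdvd'⟩ := (Prime.dvd_finset_prod_iff hq.prime M).mp hdvd
    exact hsm x q hq hdvd'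
  · apply ext_of
    · rw [map_pow, hpi, one_pow]
    · intro x
      rw [sec_pow hpi]
      obtain ⟨c, hc⟩ := Finset.dvd_prod_of_mem M (Finset.mem_univ x)
      rw [hc, pow_mul, hkill, one_pow]

theorem kill_of_pow (q : ℕ) (hq : 0 < q) (hsm : ∀ r : ℕ, r.Prime → r ∣ q → r ∈ P)
    {Xl : ℕ → Type} (g : TreeAut Xl) (h : Killable P (g ^ q)) : Killable P g := by
  obtain ⟨M, hM, hMs, hMk⟩ := h
  refine ⟨q * M, Nat.mul_pos hq hM, ?_, ?_⟩
  · intro r hr hdvd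
    rcases (Nat.Prime.dvd_mul hr).mp hdvd with h' | h'
    · exact hsm r hr h'
    · exact hMs r hr h'
  · rw [pow_mul]
    exact hMk

/-- The terminating face recursion used as fuel. -/
def Dies : ℕ → (D : DDat) → AddSubgroup D.H → Prop
  | 0, _, S => S = ⊥
  | F + 1, D, S => S = ⊥ ∨ Dies F D.shift (faceT D S)

theorem face_of_empty (D : DDat) : face D.p D.N 0 (∅ : Set (Fin (D.N 1))) = ⊥ := by
  rw [face]
  convert AddSubgroup.closure_empty
  simp

/-- The condition-D recursion from an arbitrary starting set. -/
def ZS (D : DDat) (Z : Set (Fin (D.N 1))) : (m : ℕ) → Set (Fin (D.N (m + 1)))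
  | 0 => Z
  | m + 1 => Znext D.p D.N D.y m (ZS D Z m)

theorem ZS_shift (D : DDat) (Z : Set (Fin (D.N 1))) :
    ∀ m, ZS D Z (m + 1) = ZS D.shift (Znext D.p D.N D.y 0 Z) m
  | 0 => rfl
  | m + 1 => by
    show Znext D.p D.N D.y (m + 1) (ZS D Z (m + 1)) = _
    rw [ZS_shift D Z m]
    rfl

theorem dies_of_ZS : ∀ (m : ℕ) (D : DDat) (Z : Set (Fin (D.N 1))),
    ZS D Z m = ∅ → Dies m D.shift (face D.p D.N 0 Z)
  | 0, D, Z, h => by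
    have hZ : Z = ∅ := h
    rw [hZ]
    exact face_of_empty D
  | m + 1, D, Z, h => by
    right
    show Dies m D.shift.shift (faceT D.shift (face D.p D.N 0 Z))
    have : faceT D.shift (face D.p D.N 0 Z)
        = face D.shift.p D.shift.N 0 (Znext D.p D.N D.y 0 Z) := rfl
    rw [this]
    apply dies_of_ZS m D.shift (Znext D.p D.N D.y 0 Z)
    rw [← ZS_shift]
    exact h

def vim {n : ℕ} (Z : Set (Fin n)) : Set ℕ := Fin.val '' Z

theorem vim_inj {n : ℕ} {Z Z' : Set (Fin n)} (h : vim Z = vim Z') : Z = Z' :=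
  Set.image_injective.mpr Fin.val_injective h

theorem vim_empty {n : ℕ} {Z : Set (Fin n)} (h : vim Z = ∅) : Z = ∅ :=
  Set.image_eq_empty.mp h

theorem vim_Znext_congr (p N : ℕ → ℕ) (y : ∀ k, Fin (N (k + 1)) → Hgrp p N k)
    (k k' : ℕ) (hk : k = k') (Z : Set (Fin (N (k + 1)))) (Z' : Set (Fin (N (k' + 1))))
    (hZ : vim Z = vim Z') : vim (Znext p N y k Z) = vim (Znext p N y k' Z') := by
  subst hk
  rw [vim_inj hZ]

theorem vim_Zfam_ZS (D : DDat) (x : D.H) :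
    ∀ m, vim (Zfam D.p D.N D.y 0 x m)
      = vim (ZS D {j | D.y 0 j ∈ AddSubgroup.zmultiples x} m)
  | 0 => rfl
  | m + 1 => by
    show vim (Znext D.p D.N D.y (0 + m) (Zfam D.p D.N D.y 0 x m))
      = vim (Znext D.p D.N D.y m (ZS D _ m))
    exact vim_Znext_congr D.p D.N D.y (0 + m) m (Nat.zero_add m) _ _
      (vim_Zfam_ZS D x m)

theorem luckyDies (D : DDat) (hl : LuckyD D.p D.N D.y 0) (u : D.H) (hu : u ≠ 0) :
    ∃ F, Dies F D.shift (faceT D (AddSubgroup.zmultiples u)) := by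
  obtain ⟨m, hm⟩ := hl u hu
  refine ⟨m, ?_⟩
  apply dies_of_ZS m D {j | D.y 0 j ∈ AddSubgroup.zmultiples u}
  apply vim_empty
  rw [← vim_Zfam_ZS D u m, hm]
  simp [vim]

theorem vim_Znext_shift_congr (D : DDat) (k k' : ℕ) (hk : k + 1 = k')
    (Z : Set (Fin (D.shift.N (k + 1)))) (Z' : Set (Fin (D.N (k' + 1))))
    (hZ : vim Z = vim Z') :
    vim (Znext D.shift.p D.shift.N D.shift.y k Z) = vim (Znext D.p D.N D.y k' Z') := by
  subst hk
  rw [vim_inj hZ]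
  rfl

theorem vim_Zfam_shift (D : DDat) (i : ℕ) (x : Hgrp D.p D.N (i + 1)) :
    ∀ m, vim (Zfam D.shift.p D.shift.N D.shift.y i x m)
      = vim (Zfam D.p D.N D.y (i + 1) x m)
  | 0 => rfl
  | m + 1 => by
    show vim (Znext D.shift.p D.shift.N D.shift.y (i + m) (Zfam D.shift.p D.shift.N D.shift.y i x m))
      = vim (Znext D.p D.N D.y (i + 1 + m) (Zfam D.p D.N D.y (i + 1) x m))
    exact vim_Znext_shift_congr D (i + m) (i + 1 + m) (by omega) _ _
      (vim_Zfam_shift D i x m)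

theorem luckyD_shift (D : DDat) (i : ℕ) (h : LuckyD D.p D.N D.y (i + 1)) :
    LuckyD D.shift.p D.shift.N D.shift.y i := by
  intro x hx
  obtain ⟨m, hm⟩ := h x hx
  refine ⟨m, ?_⟩
  apply vim_empty
  rw [vim_Zfam_shift D i x m, hm]
  simp [vim]

theorem hluck_shift (D : DDat) (h : {i | LuckyD D.p D.N D.y i}.Infinite) :
    {i | LuckyD D.shift.p D.shift.N D.shift.y i}.Infinite := by
  have h1 : ({i | LuckyD D.p D.N D.y i} \ {0}).Infinite :=
    h.diff (Set.finite_singleton 0)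
  have h2 : Set.InjOn (fun n => n - 1) ({i | LuckyD D.p D.N D.y i} \ {0}) := by
    intro a ha b hb hab
    simp only [Set.mem_diff, Set.mem_singleton_iff] at ha hb
    dsimp only at hab
    omega
  apply Set.Infinite.mono ?_ (h1.image h2)
  rintro _ ⟨s, ⟨hs, hs0⟩, rfl⟩
  simp only [Set.mem_singleton_iff] at hs0
  have hss : s - 1 + 1 = s := by omega
  apply luckyD_shift
  rw [hss]
  exact hs

end Dice4

section Dice5

open TreeAut

variable (P : Finset ℕ)

theorem psmul_zero (D : DDat) (u : D.H) : (D.p 0) • u = 0 := by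
  funext j
  rw [Pi.smul_apply, nsmul_eq_mul, ZMod.natCast_self, zero_mul]
  rfl

theorem pi_eval_pow (D : DDat) (l : List (EE D)) :
    pi ((eval D l) ^ (D.p 0)) = 1 := by
  rw [map_pow, pi_eval, addLeft_pow', psmul_zero, addLeft_zero']

theorem nsmul_inj (D : DDat) [Fact (D.p 0).Prime] {u : D.H} (hu : u ≠ 0)
    {c₁ c₂ : ℕ} (h₁ : c₁ < D.p 0) (h₂ : c₂ < D.p 0) (h : c₁ • u = c₂ • u) :
    c₁ = c₂ := by
  obtain ⟨j, hj⟩ := Function.ne_iff.mp hu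
  have hj' : u j ≠ 0 := hj
  have hc := congrFun h j
  rw [Pi.smul_apply, Pi.smul_apply, nsmul_eq_mul, nsmul_eq_mul] at hc
  have hcast : (c₁ : ZMod (D.p 0)) = (c₂ : ZMod (D.p 0)) := mul_right_cancel₀ hj' hc
  have := congrArg ZMod.val hcast
  rwa [ZMod.val_cast_of_lt h₁, ZMod.val_cast_of_lt h₂] at this

theorem nsmul_mem_zmultiples (D : DDat) (u : D.H) (c : ℕ) :
    c • u ∈ AddSubgroup.zmultiples u :=
  AddSubgroup.nsmul_mem _ (AddSubgroup.mem_zmultiples u) c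

/-- The coset of the line generated by `u` through `x₀`. -/
def CSet (D : DDat) (u x₀ : D.H) : Set D.H :=
  {z | z - x₀ ∈ AddSubgroup.zmultiples u}

theorem CSet_zero (D : DDat) (x₀ : D.H) : CSet D 0 x₀ = {x₀} := by
  ext z
  constructor
  · intro hz
    obtain ⟨m, hm⟩ := AddSubgroup.mem_zmultiples_iff.mp hz
    rw [smul_zero] at hm
    have : z - x₀ = 0 := hm.symm
    have := sub_eq_zero.mp this
    exact this
  · intro hz
    have hz' : z = x₀ := hz
    show z - x₀ ∈ AddSubgroup.zmultiples (0 : D.H)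
    rw [hz', sub_self]
    exact zero_mem _

theorem mem_CSet_self (D : DDat) (u x : D.H) : x ∈ CSet D u x := by
  show x - x ∈ AddSubgroup.zmultiples u
  rw [sub_self]
  exact zero_mem _

theorem mem_CSet_smul (D : DDat) (u x : D.H) (c : ℕ) : (c • u) + x ∈ CSet D u x := by
  show (c • u) + x - x ∈ AddSubgroup.zmultiples u
  rw [add_sub_cancel_right]
  exact nsmul_mem_zmultiples D u c

theorem entryOK_mono (D : DDat) {S S' : AddSubgroup D.H} (h : S ≤ S') (a : EE D) :
    EntryOK D S a → EntryOK D S' a := by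
  cases a with
  | inl r => exact fun hr => h hr
  | inr ve => exact fun hv => h hv

/-- The outer induction hypothesis: shorter lists (at any data) are killable. -/
def KillHyp (n : ℕ) : Prop :=
  ∀ D : DDat, DOK P D → {i | LuckyD D.p D.N D.y i}.Infinite →
    ∀ l : List (EE D), cntR D l < n → Killable P (eval D l)

theorem kill_pow_sections (hP : ∀ q ∈ P, q.Prime) (D : DDat) (hD : DOK P D)
    (g : TreeAut D.Xf) (hs : ∀ x : D.H, Killable P (sec (g ^ (D.p 0)) x))
    (hpi : pi (g ^ (D.p 0)) = 1) : Killable P g := by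
  have hpp := hP _ (hD 0)
  haveI : NeZero (D.p 0) := ⟨hpp.pos.ne'⟩
  refine kill_of_pow P (D.p 0) hpp.pos ?_ g (kill_of_sections P D _ hpi hs)
  intro r hr hdvd
  rw [(Nat.prime_dvd_prime_iff_eq hr hpp).mp hdvd]
  exact hD 0

theorem hard_entries (D : DDat) (l : List (EE D)) (x₀ : D.H)
    (hC : AllSpinesIn D l (CSet D (tau D l) x₀)) (x : D.H)
    (hx : x ∈ CSet D (tau D l) x₀) :
    ∀ a ∈ powList D l x (D.p 0),
      EntryOK D.shift (faceT D (AddSubgroup.zmultiples (tau D l))) a := by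
  intro a ha
  obtain ⟨c, hc⟩ := mem_powList D l x (D.p 0) a ha
  refine secList_entriesOK D _ _ le_rfl l _ hC _ ?_ a hc
  intro s hs
  have hx' : x - x₀ ∈ AddSubgroup.zmultiples (tau D l) := hx
  have hs' : s - x₀ ∈ AddSubgroup.zmultiples (tau D l) := hs
  have key : (c • tau D l) + x - s = (c • tau D l) + ((x - x₀) - (s - x₀)) := by abel
  rw [key]
  exact add_mem (nsmul_mem_zmultiples D _ c) (sub_mem hx' hs')

theorem hard_cnt (D : DDat) [Fact (D.p 0).Prime] (l : List (EE D))
    (hu : tau D l ≠ 0) (x : D.H) :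
    cntR D.shift (powList D l x (D.p 0)) ≤ cntR D l := by
  haveI : NeZero (D.p 0) := ⟨(Fact.out : (D.p 0).Prime).pos.ne'⟩
  rw [cntR_powList]
  have hinj : ∀ c₁ ∈ Finset.range (D.p 0), ∀ c₂ ∈ Finset.range (D.p 0),
      (c₁ • tau D l) + x = (c₂ • tau D l) + x → c₁ = c₂ := by
    intro c₁ h₁ c₂ h₂ h
    exact nsmul_inj D hu (Finset.mem_range.mp h₁) (Finset.mem_range.mp h₂)
      (add_right_cancel h)
  calc ∑ c ∈ Finset.range (D.p 0), spineCnt D l ((c • tau D l) + x)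
      = ∑ z ∈ (Finset.range (D.p 0)).image (fun c => (c • tau D l) + x),
          spineCnt D l z := (Finset.sum_image hinj).symm
    _ ≤ ∑ z : D.H, spineCnt D l z :=
        Finset.sum_le_sum_of_subset (Finset.subset_univ _)
    _ = cntR D l := spineCnt_total D l

theorem nonconc_cnt (D : DDat) [Fact (D.p 0).Prime] (l : List (EE D))
    (hu : tau D l ≠ 0) (x : D.H)
    (hnc : ¬ AllSpinesIn D l (CSet D (tau D l) x)) :
    cntR D.shift (powList D l x (D.p 0)) < cntR D l := by
  haveI : NeZero (D.p 0) := ⟨(Fact.out : (D.p 0).Prime).pos.ne'⟩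
  obtain ⟨z₀, hz₀c, hz₀⟩ : ∃ z₀, spineCnt D l z₀ ≠ 0 ∧ z₀ ∉ CSet D (tau D l) x := by
    by_contra hcon
    push_neg at hcon
    exact hnc ((allSpines_iff D l _).mpr fun z hz => hcon z hz)
  rw [cntR_powList]
  have hinj : ∀ c₁ ∈ Finset.range (D.p 0), ∀ c₂ ∈ Finset.range (D.p 0),
      (c₁ • tau D l) + x = (c₂ • tau D l) + x → c₁ = c₂ := by
    intro c₁ h₁ c₂ h₂ h
    exact nsmul_inj D hu (Finset.mem_range.mp h₁) (Finset.mem_range.mp h₂)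
      (add_right_cancel h)
  have himg : (Finset.range (D.p 0)).image (fun c => (c • tau D l) + x)
      ⊆ Finset.univ.erase z₀ := by
    intro z hz
    obtain ⟨c, _, rfl⟩ := Finset.mem_image.mp hz
    refine Finset.mem_erase.mpr ⟨?_, Finset.mem_univ _⟩
    intro hzz
    exact hz₀ (hzz ▸ mem_CSet_smul D (tau D l) x c)
  have h1 : ∑ c ∈ Finset.range (D.p 0), spineCnt D l ((c • tau D l) + x)
      = ∑ z ∈ (Finset.range (D.p 0)).image (fun c => (c • tau D l) + x),
          spineCnt D l z := (Finset.sum_image hinj).symm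
  have h2 : ∑ z ∈ (Finset.range (D.p 0)).image (fun c => (c • tau D l) + x),
      spineCnt D l z ≤ ∑ z ∈ Finset.univ.erase z₀, spineCnt D l z :=
    Finset.sum_le_sum_of_subset himg
  have h3 : spineCnt D l z₀ + ∑ z ∈ Finset.univ.erase z₀, spineCnt D l z
      = ∑ z : D.H, spineCnt D l z :=
    Finset.add_sum_erase _ _ (Finset.mem_univ z₀)
  have h4 := spineCnt_total D l
  omega

theorem offcoset_kill (hP : ∀ q ∈ P, q.Prime) (D : DDat) (hD : DOK P D)
    (l : List (EE D)) (x₀ : D.H) (hC : AllSpinesIn D l (CSet D (tau D l) x₀))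
    (x : D.H) (hx : x ∉ CSet D (tau D l) x₀) :
    Killable P (eval D.shift (powList D l x (D.p 0))) := by
  have hleft : ∀ a ∈ powList D l x (D.p 0), a.isLeft := by
    intro a ha
    obtain ⟨c, hc⟩ := mem_powList D l x (D.p 0) a ha
    refine secList_allLeft D l _ hC _ ?_ a hc
    intro hmem
    apply hx
    have h1 : (c • tau D l) + x - x₀ ∈ AddSubgroup.zmultiples (tau D l) := hmem
    have key : x - x₀ = ((c • tau D l) + x - x₀) - (c • tau D l) := by abel
    show x - x₀ ∈ AddSubgroup.zmultiples (tau D l)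
    rw [key]
    exact sub_mem h1 (nsmul_mem_zmultiples D _ c)
  rw [eval_allLeft _ _ hleft]
  exact kill_rooted P hP D.shift (hD.shift) _

theorem main_easy (n : ℕ) (hP : ∀ q ∈ P, q.Prime) (IH : KillHyp P n) (D : DDat)
    (hD : DOK P D) (hlk : {i | LuckyD D.p D.N D.y i}.Infinite)
    (l : List (EE D)) (hcnt : cntR D l ≤ n)
    (hnothard : tau D l = 0 ∨ ¬∃ x₀, AllSpinesIn D l (CSet D (tau D l) x₀)) :
    Killable P (eval D l) := by
  have hpp := hP _ (hD 0)
  haveI : Fact (D.p 0).Prime := ⟨hpp⟩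
  haveI : NeZero (D.p 0) := ⟨hpp.pos.ne'⟩
  by_cases hu : tau D l = 0
  · -- no root action: analyze sections of `eval D l` directly
    have hpi : pi (eval D l) = 1 := by rw [pi_eval, hu, addLeft_zero']
    by_cases hconc : ∃ x₀, AllSpinesIn D l (CSet D (tau D l) x₀)
    · obtain ⟨x₀, hC⟩ := hconc
      rw [hu, CSet_zero] at hC
      apply kill_of_sections P D _ hpi
      intro x
      rw [sec_eval]
      by_cases hx : x = x₀
      · subst hx
        obtain ⟨E, hE⟩ := eval_pure D.shift _ (secList_pure D l x hC)
        rw [hE]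
        exact kill_w_zpow P hP D.shift (hD.shift) E
      · rw [eval_allLeft _ _ (secList_allLeft D l _ hC x hx)]
        exact kill_rooted P hP D.shift (hD.shift) _
    · -- all sections strictly shorter
      apply kill_of_sections P D _ hpi
      intro x
      rw [sec_eval]
      apply IH D.shift (hD.shift) (hluck_shift D hlk)
      rw [cntR_secList]
      push_neg at hconc
      obtain ⟨z₀, hz₀c, hz₀⟩ : ∃ z₀, spineCnt D l z₀ ≠ 0 ∧ z₀ ∉ CSet D (tau D l) x := by
        by_contra hcon
        push_neg at hcon
        exact hconc x ((allSpines_iff D l _).mpr fun z hz => hcon z hz)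
      have hxz : x ≠ z₀ := by
        intro hxx
        exact hz₀ (hxx ▸ mem_CSet_self D (tau D l) x)
      have hsub : ({x, z₀} : Finset D.H) ⊆ Finset.univ := Finset.subset_univ _
      have hpair : spineCnt D l x + spineCnt D l z₀
          = ∑ z ∈ ({x, z₀} : Finset D.H), spineCnt D l z :=
        (Finset.sum_pair hxz).symm
      have hle : ∑ z ∈ ({x, z₀} : Finset D.H), spineCnt D l z
          ≤ ∑ z : D.H, spineCnt D l z := Finset.sum_le_sum_of_subset hsub
      have htot := spineCnt_total D l
      omega
  · -- nontrivial root action, not concentrated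
    have hconc : ¬∃ x₀, AllSpinesIn D l (CSet D (tau D l) x₀) := by
      rcases hnothard with h | h
      · exact absurd h hu
      · exact h
    push_neg at hconc
    apply kill_pow_sections P hP D hD _ ?_ (pi_eval_pow D l)
    intro x
    rw [sec_eval_pow]
    apply IH D.shift (hD.shift) (hluck_shift D hlk)
    calc cntR D.shift (powList D l x (D.p 0)) < cntR D l :=
          nonconc_cnt D l hu x (hconc x)
      _ ≤ n := hcnt

theorem claim2 (n : ℕ) (hP : ∀ q ∈ P, q.Prime) (IH : KillHyp P n) :
    ∀ (F : ℕ) (D : DDat), DOK P D → {i | LuckyD D.p D.N D.y i}.Infinite →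
      ∀ (S : AddSubgroup D.H) (l : List (EE D)), (∀ a ∈ l, EntryOK D S a) →
        cntR D l ≤ n → Dies F D S → Killable P (eval D l) := by
  intro F
  induction F with
  | zero =>
    intro D hD hlk S l hentry hcnt hdies
    have hS : S = ⊥ := hdies
    apply main_easy P n hP IH D hD hlk l hcnt
    left
    have := tau_mem D S l hentry
    rw [hS] at this
    exact AddSubgroup.mem_bot.mp this
  | succ F ihF =>
    intro D hD hlk S l hentry hcnt hdies
    by_cases hu : tau D l = 0
    · exact main_easy P n hP IH D hD hlk l hcnt (Or.inl hu)
    · by_cases hconc : ∃ x₀, AllSpinesIn D l (CSet D (tau D l) x₀)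
      · -- hard case: recurse along the Dies chain
        obtain ⟨x₀, hC⟩ := hconc
        have huS : tau D l ∈ S := tau_mem D S l hentry
        rcases hdies with hS | hdies
        · exact absurd (AddSubgroup.mem_bot.mp (hS ▸ huS)) hu
        · have hpp := hP _ (hD 0)
          haveI : Fact (D.p 0).Prime := ⟨hpp⟩
          apply kill_pow_sections P hP D hD _ ?_ (pi_eval_pow D l)
          intro x
          rw [sec_eval_pow]
          by_cases hx : x ∈ CSet D (tau D l) x₀
          · apply ihF D.shift (hD.shift) (hluck_shift D hlk) (faceT D S)
            · intro a ha
              refine entryOK_mono D.shift ?_ a (hard_entries D l x₀ hC x hx a ha)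
              exact faceT_mono D ((AddSubgroup.zmultiples_le).mpr huS)
            · exact le_trans (hard_cnt D l hu x) hcnt
            · exact hdies
          · exact offcoset_kill P hP D hD l x₀ hC x hx
      · exact main_easy P n hP IH D hD hlk l hcnt (Or.inr hconc)

theorem claimAux (n : ℕ) (hP : ∀ q ∈ P, q.Prime) (IH : KillHyp P n) :
    ∀ (K : ℕ) (D : DDat), DOK P D → {i | LuckyD D.p D.N D.y i}.Infinite →
      LuckyD D.p D.N D.y K →
      ∀ l : List (EE D), cntR D l ≤ n → Killable P (eval D l) := by
  intro K
  induction K with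
  | zero =>
    intro D hD hlk hlucky l hcnt
    by_cases hu : tau D l = 0
    · exact main_easy P n hP IH D hD hlk l hcnt (Or.inl hu)
    · by_cases hconc : ∃ x₀, AllSpinesIn D l (CSet D (tau D l) x₀)
      · obtain ⟨x₀, hC⟩ := hconc
        obtain ⟨F, hdies⟩ := luckyDies D hlucky (tau D l) hu
        have hpp := hP _ (hD 0)
        haveI : Fact (D.p 0).Prime := ⟨hpp⟩
        apply kill_pow_sections P hP D hD _ ?_ (pi_eval_pow D l)
        intro x
        rw [sec_eval_pow]
        by_cases hx : x ∈ CSet D (tau D l) x₀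
        · apply claim2 P n hP IH F D.shift (hD.shift) (hluck_shift D hlk)
            (faceT D (AddSubgroup.zmultiples (tau D l)))
          · exact hard_entries D l x₀ hC x hx
          · exact le_trans (hard_cnt D l hu x) hcnt
          · exact hdies
        · exact offcoset_kill P hP D hD l x₀ hC x hx
      · exact main_easy P n hP IH D hD hlk l hcnt (Or.inr hconc)
  | succ K ihK =>
    intro D hD hlk hlucky l hcnt
    by_cases hu : tau D l = 0
    · exact main_easy P n hP IH D hD hlk l hcnt (Or.inl hu)
    · by_cases hconc : ∃ x₀, AllSpinesIn D l (CSet D (tau D l) x₀)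
      · obtain ⟨x₀, hC⟩ := hconc
        have hpp := hP _ (hD 0)
        haveI : Fact (D.p 0).Prime := ⟨hpp⟩
        apply kill_pow_sections P hP D hD _ ?_ (pi_eval_pow D l)
        intro x
        rw [sec_eval_pow]
        by_cases hx : x ∈ CSet D (tau D l) x₀
        · apply ihK D.shift (hD.shift) (hluck_shift D hlk)
            (luckyD_shift D K hlucky)
          exact le_trans (hard_cnt D l hu x) hcnt
        · exact offcoset_kill P hP D hD l x₀ hC x hx
      · exact main_easy P n hP IH D hD hlk l hcnt (Or.inr hconc)

theorem kill_all (hP : ∀ q ∈ P, q.Prime) :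
    ∀ (n : ℕ) (D : DDat), DOK P D → {i | LuckyD D.p D.N D.y i}.Infinite →
      ∀ l : List (EE D), cntR D l ≤ n → Killable P (eval D l) := by
  intro n
  induction n using Nat.strong_induction_on with
  | _ n IHs =>
    intro D hD hlk l hcnt
    have IH : KillHyp P n := by
      intro D' hD' hlk' l' hlt
      exact IHs (cntR D' l') hlt D' hD' hlk' l' le_rfl
    obtain ⟨K, hK⟩ := hlk.nonempty
    exact claimAux P n hP IH K D hD hlk hK l hcnt

end Dice5

section Dice6

open TreeAut

def invE (D : DDat) : EE D → EE D :=
  Sum.elim (fun r => Sum.inl (-r)) fun ve => Sum.inr (ve.1, -ve.2)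

theorem mfac_invE (D : DDat) (a : EE D) : mfac D (invE D a) = (mfac D a)⁻¹ := by
  cases a with
  | inl r =>
    show rooted (-r) = (rooted r)⁻¹
    rw [rooted_inv]
  | inr ve =>
    obtain ⟨v, e⟩ := ve
    show conjW D v (-e) = (conjW D v e)⁻¹
    rw [conjW, conjW, mul_inv_rev, mul_inv_rev, inv_inv, zpow_neg, mul_assoc]

theorem eval_inv (D : DDat) (l : List (EE D)) :
    (eval D l)⁻¹ = eval D ((l.map (invE D)).reverse) := by
  induction l with
  | nil => rw [eval_nil, inv_one, List.map_nil, List.reverse_nil, eval_nil]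
  | cons a t ih =>
    rw [eval_cons, mul_inv_rev, ih, List.map_cons, List.reverse_cons, eval_append]
    congr 1
    rw [eval_cons, eval_nil, mul_one, mfac_invE]

theorem exists_list (p N : ℕ → ℕ) (y : ∀ k, Fin (N (k + 1)) → Hgrp p N k)
    (g : TreeAut fun k => Hgrp p N k) (hg : g ∈ diceGroup p N y) :
    ∃ l : List (EE (DDat.mk p N y)), g = eval (DDat.mk p N y) l := by
  induction hg using Subgroup.closure_induction with
  | mem x hx =>
    rcases hx with hx | ⟨j, hj⟩
    · refine ⟨[Sum.inr (0, 1)], ?_⟩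
      rw [Set.mem_singleton_iff.mp hx]
      rw [eval_cons, eval_nil, mul_one]
      show (DDat.mk p N y).w = conjW (DDat.mk p N y) 0 1
      rw [conjW_zero, zpow_one]
    · refine ⟨[Sum.inl (Pi.single j 1)], ?_⟩
      rw [← hj, eval_cons, eval_nil, mul_one]
      show rootedDice p N j = rooted (Pi.single j 1)
      funext n v
      cases n with
      | zero => rfl
      | succ n => rfl
  | one => exact ⟨[], rfl⟩
  | mul a b _ _ iha ihb =>
    obtain ⟨la, hla⟩ := iha
    obtain ⟨lb, hlb⟩ := ihb
    exact ⟨la ++ lb, by rw [hla, hlb, eval_append]⟩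
  | inv a _ iha =>
    obtain ⟨la, hla⟩ := iha
    exact ⟨(la.map (invE _)).reverse, by rw [hla, eval_inv]⟩

end Dice6

end Aux

end DicePaper

open DicePaper in
/-- if the dice roll is lucky (condition D) at infinitely many steps,
then the dice group `G = ⟨w₁, A₁⟩` is periodic and the order of every element is a
product of primes from `P`. -/
theorem stmt14 (P : Finset ℕ) (hP : ∀ q ∈ P, q.Prime)
    (p : ℕ → ℕ) (hp : ∀ i, p i ∈ P)
    (N : ℕ → ℕ) (hN : ∀ i, 0 < N i)
    (y : ∀ k, Fin (N (k + 1)) → Hgrp p N k)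
    (hy0 : ∀ k j, y k j ≠ 0)
    (hyinj : ∀ k, Function.Injective (y k))
    (hlucky : {i : ℕ | LuckyD p N y i}.Infinite) :
    ∀ g ∈ diceGroup p N y,
      IsOfFinOrder g ∧ ∀ q : ℕ, q.Prime → q ∣ orderOf g → q ∈ P := by
  intro g hg
  obtain ⟨l, rfl⟩ := Aux.exists_list p N y g hg
  have hDOK : Aux.DOK P (Aux.DDat.mk p N y) := fun i => hp i
  obtain ⟨M, hM0, hMs, hMk⟩ :=
    Aux.kill_all P hP (Aux.cntR (Aux.DDat.mk p N y) l) (Aux.DDat.mk p N y)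
      hDOK hlucky l le_rfl
  constructor
  · exact isOfFinOrder_iff_pow_eq_one.mpr ⟨M, hM0, hMk⟩
  · intro q hq hqd
    have hdvd : orderOf (Aux.eval (Aux.DDat.mk p N y) l) ∣ M :=
      orderOf_dvd_of_pow_eq_one hMk
    exact hMs q hq (hqd.trans hdvd)
end

section
/- Assume that condition DDmin holds at infinitely many steps i ∈ ℕ, namely: every line in H_i through 1_i contains at most one point of Y_i, and for every j the cyclic subgroup ⟨a_{i+1,j}⟩ of H_{i+1} contains no point of Y_{i+1}. Then the dice group G = ⟨w₁, A₁⟩ is periodic, and every g ∈ G has finite order all of whose prime divisors belong to P. -/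
universe u

namespace DicePaper

open TreeAut

section General

variable {X : ℕ → Type u}

/-- root permutation as a monoid hom -/
def rho (f : TreeAut X) : Equiv.Perm (X 0) := f 0 PUnit.unit

theorem rho_mul (f g : TreeAut X) : rho (f * g) = rho f * rho g := rfl

theorem rho_one : rho (1 : TreeAut X) = 1 := rfl

theorem rho_pow (f : TreeAut X) (m : ℕ) : rho (f ^ m) = rho f ^ m := by
  induction m with
  | zero => simp [pow_zero, rho_one]
  | succ m ih => rw [pow_succ, pow_succ, rho_mul, ih]

theorem sec_one (x : X 0) : sec (1 : TreeAut X) x = 1 := rfl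

theorem eq_one_of (f : TreeAut X) (h0 : rho f = 1) (hs : ∀ x, sec f x = 1) : f = 1 := by
  funext n v
  cases n with
  | zero =>
    cases v
    exact congrArg (fun (e : Equiv.Perm (X 0)) => e) h0
  | succ n =>
    have : sec f v.1 n v.2 = (1 : TreeAut fun k => X (k+1)) n v.2 := by rw [hs v.1]
    exact this

theorem sec_pow_s15 (f : TreeAut X) (hf : rho f = 1) (m : ℕ) (x : X 0) :
    sec (f ^ m) x = (sec f x) ^ m := by
  induction m with
  | zero => rw [pow_zero, pow_zero]; rfl
  | succ m ih =>
    have hx : (f 0 PUnit.unit) x = x := by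
      rw [show f 0 PUnit.unit = rho f from rfl, hf]; rfl
    rw [pow_succ, pow_succ, sec_mul, hx, ih]

end General

section Smooth

/-- `P`-smooth positive numbers. -/
def PS (P : Finset ℕ) (M : ℕ) : Prop := 0 < M ∧ ∀ q : ℕ, q.Prime → q ∣ M → q ∈ P

theorem PS.one (P : Finset ℕ) : PS P 1 :=
  ⟨one_pos, fun q hq hd => absurd (Nat.le_of_dvd one_pos hd) (by have := hq.two_le; omega)⟩

theorem PS.mul {P : Finset ℕ} {M M' : ℕ} (h : PS P M) (h' : PS P M') : PS P (M * M') :=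
  ⟨Nat.mul_pos h.1 h'.1, fun q hq hd => by
    rcases (Nat.Prime.dvd_mul hq).1 hd with h1 | h1
    · exact h.2 q hq h1
    · exact h'.2 q hq h1⟩

theorem PS.of_mem {P : Finset ℕ} (hP : ∀ q ∈ P, q.Prime) {q : ℕ} (hq : q ∈ P) : PS P q :=
  ⟨(hP q hq).pos, fun r hr hd => by
    rwa [(Nat.prime_dvd_prime_iff_eq hr (hP q hq)).1 hd]⟩

theorem PS.prod {P : Finset ℕ} {ι : Type*} (s : Finset ι) (f : ι → ℕ)
    (h : ∀ i ∈ s, PS P (f i)) : PS P (s.prod f) := by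
  classical
  refine Finset.prod_induction f (PS P) (fun a b ha hb => ha.mul hb) (PS.one P) h

end Smooth

section Bootstrap

variable {X : ℕ → Type u}

/-- Finite order with `P`-smooth exponent. -/
def FinOrd (P : Finset ℕ) (f : TreeAut X) : Prop := ∃ M, PS P M ∧ f ^ M = 1

theorem finOrd_one (P : Finset ℕ) : FinOrd P (1 : TreeAut X) := ⟨1, PS.one P, one_pow 1⟩

theorem bootstrap (P : Finset ℕ) [Fintype (X 0)] (g : TreeAut X) (q : ℕ) (hq : PS P q)
    (hrho : rho g ^ q = 1) (hsec : ∀ x : X 0, FinOrd P (sec (g ^ q) x)) : FinOrd P g := by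
  classical
  choose M hM hM1 using hsec
  set K := (Finset.univ : Finset (X 0)).prod M with hK
  have hKPS : PS P K := PS.prod _ _ (fun x _ => hM x)
  refine ⟨q * K, hq.mul hKPS, ?_⟩
  rw [pow_mul]
  apply eq_one_of
  · rw [rho_pow, rho_pow, hrho, one_pow]
  · intro x
    have h1 : rho (g ^ q) = 1 := by rw [rho_pow, hrho]
    rw [sec_pow_s15 _ h1]
    obtain ⟨c, hc⟩ := Finset.dvd_prod_of_mem M (Finset.mem_univ x)
    rw [← hK] at hc
    rw [hc, pow_mul, hM1 x, one_pow]

end Bootstrap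

end DicePaper
namespace DicePaper

open TreeAut

section NF

variable (p N : ℕ → ℕ) (y : ∀ k, Fin (N (k + 1)) → Hgrp p N k)

/-- general rooted automorphism -/
def rtd (v : Hgrp p N 0) : TreeAut fun k => Hgrp p N k :=
  fun n _ => match n with
  | 0 => Equiv.addLeft v
  | _ + 1 => 1

theorem rootedDice_eq (j : Fin (N 0)) : rootedDice p N j = rtd p N (Pi.single j 1) := rfl

theorem rho_rtd (v : Hgrp p N 0) : rho (rtd p N v) = Equiv.addLeft v := rfl

theorem sec_rtd (v x : Hgrp p N 0) : sec (rtd p N v) x = 1 := rfl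

theorem addLeft_mul {H : Type*} [AddCommGroup H] (u v : H) :
    Equiv.addLeft u * Equiv.addLeft v = Equiv.addLeft (u + v) := by
  ext z
  show u + (v + z) = (u + v) + z
  rw [add_assoc]

theorem addLeft_zero'_s15 {H : Type*} [AddCommGroup H] :
    Equiv.addLeft (0 : H) = 1 := by
  ext z; show 0 + z = z; rw [zero_add]

theorem rtd_mul (u v : Hgrp p N 0) : rtd p N u * rtd p N v = rtd p N (u + v) := by
  funext n w
  cases n with
  | zero => exact addLeft_mul u v
  | succ n => exact one_mul 1

theorem rtd_zero : rtd p N 0 = 1 := by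
  funext n w
  cases n with
  | zero => exact addLeft_zero'_s15
  | succ n => rfl

theorem rtd_inv (v : Hgrp p N 0) : (rtd p N v)⁻¹ = rtd p N (-v) := by
  rw [eq_comm, eq_inv_iff_mul_eq_one, rtd_mul, neg_add_cancel, rtd_zero]

theorem rtd_pow (v : Hgrp p N 0) (m : ℕ) : rtd p N v ^ m = rtd p N (m • v) := by
  induction m with
  | zero => rw [pow_zero, zero_smul, rtd_zero]
  | succ m ih => rw [pow_succ, ih, rtd_mul, succ_nsmul]

/-- the conjugated directed generator -/
noncomputable def letter (b : Hgrp p N 0) : TreeAut fun k => Hgrp p N k :=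
  rtd p N b * wDice p N y * (rtd p N b)⁻¹

noncomputable def prodL (L : List (Hgrp p N 0)) : TreeAut fun k => Hgrp p N k :=
  (L.map (letter p N y)).prod

noncomputable def evalNF (a : Hgrp p N 0) (L : List (Hgrp p N 0)) :
    TreeAut fun k => Hgrp p N k :=
  rtd p N a * prodL p N y L

theorem rho_w : rho (wDice p N y) = 1 := rfl

theorem rho_inv {X : ℕ → Type u} (f : TreeAut X) : rho f⁻¹ = (rho f)⁻¹ := rfl

theorem rho_letter (b : Hgrp p N 0) : rho (letter p N y b) = 1 := by
  rw [letter, rho_mul, rho_mul, rho_inv, rho_w, mul_one, mul_inv_cancel]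

theorem prodL_nil : prodL p N y [] = 1 := rfl

theorem prodL_cons (b : Hgrp p N 0) (L : List (Hgrp p N 0)) :
    prodL p N y (b :: L) = letter p N y b * prodL p N y L := by
  rw [prodL, List.map_cons, List.prod_cons]; rfl

theorem rho_prodL (L : List (Hgrp p N 0)) : rho (prodL p N y L) = 1 := by
  induction L with
  | nil => exact rho_one
  | cons b L ih => rw [prodL_cons, rho_mul, rho_letter, one_mul, ih]

theorem rho_evalNF (a : Hgrp p N 0) (L : List (Hgrp p N 0)) :
    rho (evalNF p N y a L) = Equiv.addLeft a := by
  rw [evalNF, rho_mul, rho_prodL, mul_one, rho_rtd]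

/-- section of the directed generator -/
noncomputable def sw (z : Hgrp p N 0) : TreeAut fun k => Hgrp p N (k + 1) :=
  sec (wDice p N y) z

theorem sw_zero :
    sw p N y 0 = wDice (fun k => p (k + 1)) (fun k => N (k + 1)) (fun k => y (k + 1)) := by
  funext n v
  show wPort p N y (n + 1) (0, v) = _
  erw [wPort.eq_def]
  simp only [if_pos rfl]
  rfl

theorem sw_some (z : Hgrp p N 0) (hz : z ≠ 0) (h : ∃ j, y 0 j = z) :
    sw p N y z = rtd (fun k => p (k + 1)) (fun k => N (k + 1))
      (Pi.single h.choose (1 : ZMod (p 1))) := by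
  funext n v
  show wPort p N y (n + 1) (z, v) = _
  erw [wPort.eq_def]
  simp only [if_neg hz]
  cases n with
  | zero => simp only [dif_pos h]; rfl
  | succ n => rfl

theorem sw_none (z : Hgrp p N 0) (hz : z ≠ 0) (h : ¬∃ j, y 0 j = z) :
    sw p N y z = 1 := by
  funext n v
  show wPort p N y (n + 1) (z, v) = _
  erw [wPort.eq_def]
  simp only [if_neg hz]
  cases n with
  | zero => simp only [dif_neg h]; rfl
  | succ n => rfl

theorem sec_letter (b x : Hgrp p N 0) :
    sec (letter p N y b) x = sw p N y (x - b) := by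
  have h1 : letter p N y b = (rtd p N b * wDice p N y) * rtd p N (-b) := by
    rw [letter, rtd_inv]
  have h2 : (rtd p N (-b)) 0 PUnit.unit x = -b + x := rfl
  have h3 : (wDice p N y) 0 PUnit.unit (-b + x) = -b + x := rfl
  rw [h1, sec_mul, h2, sec_mul, h3, sec_rtd, sec_rtd, one_mul, mul_one, neg_add_eq_sub]
  rfl

/-- evaluation of a mixed list of section letters -/
noncomputable def evalZ (zs : List (Hgrp p N 0)) : TreeAut fun k => Hgrp p N (k + 1) :=
  (zs.map (sw p N y)).prod

theorem evalZ_nil : evalZ p N y [] = 1 := rfl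

theorem evalZ_cons (z : Hgrp p N 0) (zs : List (Hgrp p N 0)) :
    evalZ p N y (z :: zs) = sw p N y z * evalZ p N y zs := by
  rw [evalZ, List.map_cons, List.prod_cons]; rfl

theorem evalZ_append (zs zs' : List (Hgrp p N 0)) :
    evalZ p N y (zs ++ zs') = evalZ p N y zs * evalZ p N y zs' := by
  rw [evalZ, List.map_append, List.prod_append]; rfl

theorem sec_prodL (L : List (Hgrp p N 0)) (x : Hgrp p N 0) :
    sec (prodL p N y L) x = evalZ p N y (L.map (fun b => x - b)) := by
  induction L with
  | nil => rfl
  | cons b L ih =>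
    rw [prodL_cons, sec_mul, List.map_cons, evalZ_cons]
    have h1 : (prodL p N y L) 0 PUnit.unit x = x := by
      rw [show (prodL p N y L) 0 PUnit.unit = rho (prodL p N y L) from rfl, rho_prodL]; rfl
    rw [h1, sec_letter, ih]

theorem sec_evalNF (a : Hgrp p N 0) (L : List (Hgrp p N 0)) (x : Hgrp p N 0) :
    sec (evalNF p N y a L) x = evalZ p N y (L.map (fun b => x - b)) := by
  rw [evalNF, sec_mul, sec_rtd, one_mul, sec_prodL]

theorem addLeft_pow {H : Type*} [AddCommGroup H] (a : H) (q : ℕ) (x : H) :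
    ((Equiv.addLeft a) ^ q) x = q • a + x := by
  induction q with
  | zero => simp
  | succ q ih =>
    rw [pow_succ', Equiv.Perm.mul_apply, ih]
    show a + (q • a + x) = _
    rw [succ_nsmul]
    abel

/-- the list of `z`-coordinates of the sections of `g ^ q` at `x` -/
def zsList (a x : Hgrp p N 0) (L : List (Hgrp p N 0)) : ℕ → List (Hgrp p N 0)
  | 0 => []
  | t + 1 => L.map (fun b => (t • a + x) - b) ++ zsList a x L t

theorem sec_pow_evalNF (a : Hgrp p N 0) (L : List (Hgrp p N 0)) (q : ℕ) (x : Hgrp p N 0) :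
    sec ((evalNF p N y a L) ^ q) x = evalZ p N y (zsList p N a x L q) := by
  induction q with
  | zero => rw [pow_zero]; rfl
  | succ q ih =>
    rw [pow_succ', sec_mul]
    have h1 : ((evalNF p N y a L) ^ q) 0 PUnit.unit x = q • a + x := by
      rw [show ((evalNF p N y a L) ^ q) 0 PUnit.unit = rho ((evalNF p N y a L) ^ q) from rfl,
        rho_pow, rho_evalNF, addLeft_pow]
    rw [h1, ih, sec_evalNF, zsList, evalZ_append]

theorem rho_pow_evalNF (a : Hgrp p N 0) (L : List (Hgrp p N 0)) (q : ℕ)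
    (hq : q • a = 0) : rho ((evalNF p N y a L) ^ q) = 1 := by
  rw [rho_pow, rho_evalNF]
  ext x
  rw [addLeft_pow, hq, zero_add]
  rfl

theorem mem_zsList (a x : Hgrp p N 0) (L : List (Hgrp p N 0)) (q : ℕ) (z : Hgrp p N 0)
    (hz : z ∈ zsList p N a x L q) : ∃ t, t < q ∧ ∃ b ∈ L, z = (t • a + x) - b := by
  induction q with
  | zero => simp [zsList] at hz
  | succ q ih =>
    rw [zsList, List.mem_append] at hz
    rcases hz with hz | hz
    · obtain ⟨b, hb, rfl⟩ := List.mem_map.1 hz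
      exact ⟨q, lt_add_one q, b, hb, rfl⟩
    · obtain ⟨t, ht, hb⟩ := ih hz
      exact ⟨t, ht.trans (lt_add_one q), hb⟩

end NF

end DicePaper
namespace DicePaper

open TreeAut

section Mix

variable (p N : ℕ → ℕ) (y : ∀ k, Fin (N (k + 1)) → Hgrp p N k)

/-- the rooted part of a mixed list -/
noncomputable def mixA : List (Hgrp p N 0) → Hgrp p N 1
  | [] => 0
  | z :: r => (if h : ∃ j, y 0 j = z then Pi.single h.choose (1 : ZMod (p 1)) else 0) + mixA r

/-- the decorations of a mixed list -/
noncomputable def mixL : List (Hgrp p N 0) → List (Hgrp p N 1)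
  | [] => []
  | z :: r => if z = 0 then (-(mixA p N y r)) :: mixL r else mixL r

theorem evalZ_toNF (hy0 : ∀ j, y 0 j ≠ 0) (zs : List (Hgrp p N 0)) :
    evalZ p N y zs = evalNF (fun k => p (k + 1)) (fun k => N (k + 1)) (fun k => y (k + 1))
      (mixA p N y zs) (mixL p N y zs) := by
  set p' := fun k => p (k + 1)
  set N' := fun k => N (k + 1)
  set y' := fun k => y (k + 1)
  induction zs with
  | nil =>
    rw [evalZ_nil, mixA, mixL, evalNF, prodL_nil, rtd_zero, one_mul]
  | cons z r ih =>
    rw [evalZ_cons, ih, mixA, mixL]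
    by_cases hz : z = 0
    · subst hz
      rw [if_pos rfl, dif_neg (by simpa using fun j => hy0 j), zero_add]
      rw [evalNF, evalNF, prodL_cons, letter, rtd_inv, neg_neg, sw_zero]
      set α := mixA p N y r
      set W := wDice p' N' y'
      calc W * (rtd p' N' α * prodL p' N' y' (mixL p N y r))
          = (W * rtd p' N' α) * prodL p' N' y' (mixL p N y r) := by rw [mul_assoc]
        _ = (rtd p' N' α * (rtd p' N' (-α) * W * rtd p' N' α)) *
              prodL p' N' y' (mixL p N y r) := by
            rw [show rtd p' N' α * (rtd p' N' (-α) * W * rtd p' N' α)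
                = (rtd p' N' α * rtd p' N' (-α)) * W * rtd p' N' α by
                  simp only [mul_assoc],
              rtd_mul, add_neg_cancel, rtd_zero, one_mul]
        _ = rtd p' N' α * ((rtd p' N' (-α) * W * rtd p' N' α) *
              prodL p' N' y' (mixL p N y r)) := by rw [mul_assoc]
    · by_cases h : ∃ j, y 0 j = z
      · rw [sw_some p N y z hz h, dif_pos h, if_neg hz, evalNF, evalNF, ← mul_assoc, rtd_mul]
      · rw [sw_none p N y z hz h, dif_neg h, if_neg hz, zero_add, one_mul]

theorem length_mixL (zs : List (Hgrp p N 0)) :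
    (mixL p N y zs).length = zs.count 0 := by
  induction zs with
  | nil => rfl
  | cons z r ih =>
    rw [mixL]
    by_cases hz : z = 0
    · simp [hz, List.count_cons, ih]
    · simp [hz, List.count_cons, ih]

theorem mixL_nil_of_count (zs : List (Hgrp p N 0)) (h : zs.count 0 = 0) :
    mixL p N y zs = [] := by
  have := length_mixL p N y zs
  rw [h] at this
  exact List.eq_nil_of_length_eq_zero this

theorem mix_mem (A : AddSubgroup (Hgrp p N 1)) (zs : List (Hgrp p N 0))
    (hc : ∀ z ∈ zs, ∀ h : (∃ j, y 0 j = z), Pi.single h.choose (1 : ZMod (p 1)) ∈ A) :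
    mixA p N y zs ∈ A ∧ ∀ c ∈ mixL p N y zs, c ∈ A := by
  induction zs with
  | nil => exact ⟨A.zero_mem, by simp [mixL]⟩
  | cons z r ih =>
    have ih' := ih (fun z hz h => hc z (List.mem_cons_of_mem _ hz) h)
    constructor
    · rw [mixA]
      refine A.add_mem ?_ ih'.1
      by_cases h : ∃ j, y 0 j = z
      · rw [dif_pos h]; exact hc z (List.mem_cons_self) h
      · rw [dif_neg h]; exact A.zero_mem
    · rw [mixL]
      by_cases hz : z = 0
      · rw [if_pos hz]
        intro c hcmem
        rcases List.mem_cons.1 hcmem with rfl | hcmem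
        · exact A.neg_mem ih'.1
        · exact ih'.2 c hcmem
      · rw [if_neg hz]; exact ih'.2

theorem count_zero_map_sub (v : Hgrp p N 0) (L : List (Hgrp p N 0)) :
    (L.map (fun b => v - b)).count 0 = L.count v := by
  induction L with
  | nil => rfl
  | cons b L ih =>
    rw [List.map_cons]
    simp only [List.count_cons, ih]
    congr 1
    by_cases hb : b = v
    · subst hb; simp
    · have h1 : v - b ≠ 0 := fun hc => hb (sub_eq_zero.1 hc).symm
      simp [h1, hb]

theorem count_zsList (a x : Hgrp p N 0) (L : List (Hgrp p N 0)) (q : ℕ) :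
    (zsList p N a x L q).count 0 = ∑ t ∈ Finset.range q, L.count (t • a + x) := by
  induction q with
  | zero => rfl
  | succ q ih =>
    rw [zsList, List.count_append, count_zero_map_sub, ih, Finset.sum_range_succ, add_comm]

end Mix

section Count

variable {H : Type*} [AddCommGroup H] [DecidableEq H]

theorem sum_ite_le_one (q : ℕ) (v : ℕ → H) (b : H)
    (hinj : ∀ t < q, ∀ t' < q, v t = v t' → t = t') :
    (∑ t ∈ Finset.range q, if b = v t then 1 else 0) ≤ 1 := by
  classical
  rw [Finset.sum_boole]
  norm_cast
  apply Finset.card_le_one.2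
  intro s hs t ht
  rw [Finset.mem_filter, Finset.mem_range] at hs ht
  exact hinj s hs.1 t ht.1 (hs.2.symm.trans ht.2)

theorem sum_count_le (q : ℕ) (v : ℕ → H)
    (hinj : ∀ t < q, ∀ t' < q, v t = v t' → t = t') (L : List H) :
    (∑ t ∈ Finset.range q, L.count (v t)) ≤ L.length := by
  induction L with
  | nil => simp
  | cons b L ih =>
    have : ∀ t, (b :: L).count (v t) = L.count (v t) + (if b = v t then 1 else 0) := by
      intro t; simp [List.count_cons]
    simp only [this]
    rw [Finset.sum_add_distrib, List.length_cons]
    have h2 : (∑ t ∈ Finset.range q, if b = v t then 1 else 0) ≤ 1 :=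
      sum_ite_le_one q v b hinj
    omega

theorem sum_count_lt (q : ℕ) (v : ℕ → H)
    (hinj : ∀ t < q, ∀ t' < q, v t = v t' → t = t') (L : List H)
    (b₀ : H) (hb₀ : b₀ ∈ L) (hmiss : ∀ t < q, v t ≠ b₀) :
    (∑ t ∈ Finset.range q, L.count (v t)) < L.length := by
  induction L with
  | nil => simp at hb₀
  | cons b L ih =>
    have hc : ∀ t, (b :: L).count (v t) = L.count (v t) + (if b = v t then 1 else 0) := by
      intro t; simp [List.count_cons]
    simp only [hc]
    rw [Finset.sum_add_distrib, List.length_cons]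
    have h2 : (∑ t ∈ Finset.range q, if b = v t then 1 else 0) ≤ 1 :=
      sum_ite_le_one q v b hinj
    rcases List.mem_cons.1 hb₀ with rfl | hb₀'
    · have h0 : (∑ t ∈ Finset.range q, if b₀ = v t then 1 else 0) = 0 := by
        apply Finset.sum_eq_zero
        intro t ht
        rw [if_neg (fun hc' => hmiss t (Finset.mem_range.1 ht) hc'.symm)]
      have h1 := sum_count_le q v hinj L
      omega
    · have h1 := ih hb₀'
      omega

end Count

end DicePaper
namespace DicePaper

open TreeAut

theorem smul_eq_zero_of_dvd (p n : ℕ) (M : ℕ) (h : p ∣ M) (u : Fin n → ZMod p) :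
    M • u = 0 := by
  funext c
  rw [Pi.smul_apply, Pi.zero_apply, nsmul_eq_mul]
  have : (M : ZMod p) = 0 := by
    rcases h with ⟨c', rfl⟩
    push_cast
    simp [ZMod.natCast_self]
  rw [this, zero_mul]

theorem w_pow_eq_one : ∀ (n : ℕ) (p N : ℕ → ℕ) (y : ∀ k, Fin (N (k + 1)) → Hgrp p N k)
    (M : ℕ), (∀ k, p k ∣ M) → ∀ v : Word (fun k => Hgrp p N k) n,
    ((wDice p N y) ^ M) n v = 1
  | 0, p, N, y, M, hdvd, v => by
    cases v
    show rho ((wDice p N y) ^ M) = 1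
    rw [rho_pow, rho_w, one_pow]
  | n + 1, p, N, y, M, hdvd, v => by
    show sec ((wDice p N y) ^ M) v.1 n v.2 = 1
    rw [sec_pow_s15 _ (rho_w p N y)]
    show ((sw p N y v.1) ^ M) n v.2 = 1
    by_cases hz : v.1 = 0
    · rw [hz, sw_zero]
      exact w_pow_eq_one n _ _ _ M (fun k => hdvd (k + 1)) v.2
    · by_cases h : ∃ j, y 0 j = v.1
      · rw [sw_some p N y v.1 hz h, rtd_pow,
          smul_eq_zero_of_dvd (p 1) (N 1) M (hdvd 1), rtd_zero]
        rfl
      · rw [sw_none p N y v.1 hz h, one_pow]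
        rfl

/-- the universal `P`-smooth exponent of all the directed generators -/
def bigExp (P : Finset ℕ) : ℕ := P.prod id

theorem bigExp_PS (P : Finset ℕ) (hP : ∀ q ∈ P, q.Prime) : PS P (bigExp P) :=
  PS.prod P id (fun q hq => PS.of_mem hP hq)

theorem w_pow_bigExp (P : Finset ℕ) (p N : ℕ → ℕ) (y : ∀ k, Fin (N (k + 1)) → Hgrp p N k)
    (hp : ∀ k, p k ∈ P) : (wDice p N y) ^ (bigExp P) = 1 := by
  funext n v
  have := w_pow_eq_one n p N y (bigExp P)
    (fun k => Finset.dvd_prod_of_mem id (hp k)) v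
  exact this

theorem finOrd_w_pow (P : Finset ℕ) (hP : ∀ q ∈ P, q.Prime) (p N : ℕ → ℕ)
    (y : ∀ k, Fin (N (k + 1)) → Hgrp p N k) (hp : ∀ k, p k ∈ P) (m : ℕ) :
    FinOrd P ((wDice p N y) ^ m) := by
  refine ⟨bigExp P, bigExp_PS P hP, ?_⟩
  rw [← pow_mul, mul_comm, pow_mul, w_pow_bigExp P p N y hp, one_pow]

theorem finOrd_rtd (P : Finset ℕ) (p N : ℕ → ℕ) (hp : p 0 ∈ P) (hP : ∀ q ∈ P, q.Prime)
    (v : Hgrp p N 0) : FinOrd P (rtd p N v) := by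
  refine ⟨p 0, PS.of_mem hP hp, ?_⟩
  rw [rtd_pow, smul_eq_zero_of_dvd (p 0) (N 0) (p 0) dvd_rfl, rtd_zero]

theorem smul_inj_of_prime (p0 n : ℕ) (hp : p0.Prime) (a : Fin n → ZMod p0) (ha : a ≠ 0)
    (t t' : ℕ) (ht : t < p0) (ht' : t' < p0) (heq : t • a = t' • a) : t = t' := by
  haveI : Fact p0.Prime := ⟨hp⟩
  obtain ⟨c, hc⟩ : ∃ c, a c ≠ 0 := by
    by_contra hcon
    push_neg at hcon
    exact ha (funext hcon)
  have h1 : (t : ZMod p0) * a c = (t' : ZMod p0) * a c := by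
    have := congrFun heq c
    rwa [Pi.smul_apply, Pi.smul_apply, nsmul_eq_mul, nsmul_eq_mul] at this
  have h2 : (t : ZMod p0) = (t' : ZMod p0) := mul_right_cancel₀ hc h1
  have h3 := congrArg ZMod.val h2
  rwa [ZMod.val_natCast_of_lt ht, ZMod.val_natCast_of_lt ht'] at h3

theorem diff_mem_zmultiples {H : Type*} [AddCommGroup H] (a x : H) (t t' : ℕ) :
    (t • a + x) - (t' • a + x) ∈ AddSubgroup.zmultiples a := by
  have h1 : (t • a + x) - (t' • a + x) = ((t : ℤ) - (t' : ℤ)) • a := by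
    rw [sub_smul, natCast_zsmul, natCast_zsmul]
    abel
  rw [h1]
  exact AddSubgroup.zsmul_mem_zmultiples _ _

end DicePaper
namespace DicePaper

open TreeAut

section Closure

variable (p N : ℕ → ℕ) (y : ∀ k, Fin (N (k + 1)) → Hgrp p N k)

theorem prodL_append (L L' : List (Hgrp p N 0)) :
    prodL p N y (L ++ L') = prodL p N y L * prodL p N y L' := by
  rw [prodL, prodL, prodL, List.map_append, List.prod_append]

theorem letter_mul_rtd (b a' : Hgrp p N 0) :
    letter p N y b * rtd p N a' = rtd p N a' * letter p N y (b - a') := by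
  rw [letter, letter, rtd_inv, rtd_inv]
  calc rtd p N b * wDice p N y * rtd p N (-b) * rtd p N a'
      = rtd p N b * wDice p N y * rtd p N (-b + a') := by
        rw [mul_assoc, mul_assoc, rtd_mul, ← mul_assoc]
    _ = rtd p N a' * rtd p N (b - a') * wDice p N y * rtd p N (-(b - a')) := by
        rw [rtd_mul]
        have h1 : a' + (b - a') = b := by abel
        have h2 : -b + a' = -(b - a') := by abel
        rw [h1, h2]
    _ = rtd p N a' * (rtd p N (b - a') * wDice p N y * rtd p N (-(b - a'))) := by
        simp only [mul_assoc]

theorem prodL_mul_rtd (L : List (Hgrp p N 0)) (a' : Hgrp p N 0) :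
    prodL p N y L * rtd p N a' = rtd p N a' * prodL p N y (L.map (fun b => b - a')) := by
  induction L with
  | nil => rw [prodL_nil, List.map_nil, prodL_nil, one_mul, mul_one]
  | cons b L ih =>
    rw [prodL_cons, List.map_cons, prodL_cons, mul_assoc, ih, ← mul_assoc,
      letter_mul_rtd, mul_assoc]

theorem evalNF_mul (a a' : Hgrp p N 0) (L L' : List (Hgrp p N 0)) :
    evalNF p N y a L * evalNF p N y a' L' =
      evalNF p N y (a + a') (L.map (fun b => b - a') ++ L') := by
  rw [evalNF, evalNF, evalNF, prodL_append, mul_assoc, ← mul_assoc (prodL p N y L),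
    prodL_mul_rtd, ← mul_assoc, ← mul_assoc, rtd_mul, mul_assoc]

theorem letter_pow (b : Hgrp p N 0) (m : ℕ) :
    (letter p N y b) ^ m = prodL p N y (List.replicate m b) := by
  induction m with
  | zero => rw [pow_zero, List.replicate_zero, prodL_nil]
  | succ m ih => rw [pow_succ', List.replicate_succ, prodL_cons, ih]

theorem rtd_mul_letter (a b : Hgrp p N 0) :
    rtd p N a * letter p N y b = letter p N y (b + a) * rtd p N a := by
  rw [letter, letter, rtd_inv, rtd_inv]
  calc rtd p N a * (rtd p N b * wDice p N y * rtd p N (-b))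
      = (rtd p N a * rtd p N b) * wDice p N y * rtd p N (-b) := by
        simp only [mul_assoc]
    _ = rtd p N (b + a) * wDice p N y * rtd p N (-b) := by
        rw [rtd_mul, add_comm]
    _ = rtd p N (b + a) * wDice p N y * (rtd p N (-(b + a)) * rtd p N a) := by
        rw [rtd_mul, show -(b + a) + a = -b by abel]
    _ = rtd p N (b + a) * wDice p N y * rtd p N (-(b + a)) * rtd p N a := by
        simp only [mul_assoc]

theorem evalNF_cons (a b : Hgrp p N 0) (L : List (Hgrp p N 0)) :
    evalNF p N y a (b :: L) = letter p N y (b + a) * evalNF p N y a L := by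
  rw [evalNF, evalNF, prodL_cons, ← mul_assoc, rtd_mul_letter, mul_assoc]

theorem exists_nf_inv (P : Finset ℕ) (hP : ∀ q ∈ P, q.Prime) (hp : ∀ k, p k ∈ P)
    (a : Hgrp p N 0) (L : List (Hgrp p N 0)) :
    ∃ a' L', (evalNF p N y a L)⁻¹ = evalNF p N y a' L' := by
  induction L with
  | nil =>
    refine ⟨-a, [], ?_⟩
    rw [evalNF, evalNF, prodL_nil, mul_one, mul_one, rtd_inv]
  | cons b L ih =>
    obtain ⟨a'', L'', h⟩ := ih
    rw [evalNF_cons, mul_inv_rev, h]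
    have hw : (letter p N y (b + a))⁻¹ = (letter p N y (b + a)) ^ (bigExp P - 1) := by
      have h1 : (letter p N y (b + a)) ^ (bigExp P) = 1 := by
        rw [letter]
        rw [conj_pow]
        rw [w_pow_bigExp P p N y hp]
        group
      have h2 : 1 ≤ bigExp P := (bigExp_PS P hP).1
      rw [inv_eq_iff_mul_eq_one, ← pow_succ', Nat.sub_add_cancel h2, h1]
    refine ⟨a'' + 0, L''.map (fun b' => b' - 0) ++ List.replicate (bigExp P - 1) (b + a), ?_⟩
    rw [hw, letter_pow,
      show prodL p N y (List.replicate (bigExp P - 1) (b + a))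
        = evalNF p N y 0 (List.replicate (bigExp P - 1) (b + a)) from by
          rw [evalNF, rtd_zero, one_mul],
      evalNF_mul]

theorem diceGroup_nf (P : Finset ℕ) (hP : ∀ q ∈ P, q.Prime) (hp : ∀ k, p k ∈ P)
    (g : TreeAut fun k => Hgrp p N k) (hg : g ∈ diceGroup p N y) :
    ∃ a L, g = evalNF p N y a L := by
  induction hg using Subgroup.closure_induction with
  | mem x hx =>
    rcases hx with hx | hx
    · refine ⟨0, [0], ?_⟩
      rw [Set.mem_singleton_iff.1 hx, evalNF, prodL_cons, prodL_nil, rtd_zero, one_mul,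
        mul_one, letter, rtd_zero, inv_one, one_mul, mul_one]
    · obtain ⟨j, rfl⟩ := hx
      refine ⟨Pi.single j 1, [], ?_⟩
      rw [rootedDice_eq, evalNF, prodL_nil, mul_one]
  | one => exact ⟨0, [], by rw [evalNF, prodL_nil, rtd_zero, one_mul]⟩
  | mul f g hf hg ihf ihg =>
    obtain ⟨a, L, rfl⟩ := ihf
    obtain ⟨a', L', rfl⟩ := ihg
    exact ⟨_, _, evalNF_mul p N y a a' L L'⟩
  | inv f hf ihf =>
    obtain ⟨a, L, rfl⟩ := ihf
    exact exists_nf_inv p N y P hP hp a L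

end Closure

end DicePaper
namespace DicePaper

open TreeAut

theorem evalNF_zeros (p N : ℕ → ℕ) (y : ∀ k, Fin (N (k + 1)) → Hgrp p N k)
    (L : List (Hgrp p N 0)) (hL : ∀ c ∈ L, c = 0) :
    evalNF p N y 0 L = (wDice p N y) ^ L.length := by
  induction L with
  | nil => rw [evalNF, prodL_nil, rtd_zero, one_mul, List.length_nil, pow_zero]
  | cons c L ih =>
    have hc : c = 0 := hL c (List.mem_cons_self)
    subst hc
    rw [evalNF, prodL_cons, rtd_zero, one_mul, letter, rtd_zero, inv_one, one_mul, mul_one,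
      List.length_cons, pow_succ']
    congr 1
    have := ih (fun c hc => hL c (List.mem_cons_of_mem _ hc))
    rwa [evalNF, rtd_zero, one_mul] at this

theorem sec_analysis (P : Finset ℕ) (hP : ∀ r ∈ P, r.Prime)
    (p N : ℕ → ℕ) (y : ∀ k, Fin (N (k + 1)) → Hgrp p N k)
    (hp : ∀ k, p k ∈ P) (hy0 : ∀ j : Fin (N 1), y 0 j ≠ 0)
    (a : Hgrp p N 0) (L : List (Hgrp p N 0)) :
    ∃ q : ℕ, PS P q ∧ (rho (evalNF p N y a L) ^ q = 1) ∧
      ∀ x : Hgrp p N 0,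
        (sec (evalNF p N y a L ^ q) x =
          evalNF (fun k => p (k + 1)) (fun k => N (k + 1)) (fun k => y (k + 1))
            (mixA p N y (zsList p N a x L q)) (mixL p N y (zsList p N a x L q))) ∧
        (mixL p N y (zsList p N a x L q)).length ≤ L.length ∧
        ((∃ b ∈ L, ∀ t < q, t • a + x ≠ b) →
          (mixL p N y (zsList p N a x L q)).length < L.length) ∧
        ((∀ b ∈ L, ∃ t, t < q ∧ t • a + x = b) →
          ∀ z ∈ zsList p N a x L q, z ∈ AddSubgroup.zmultiples a) := by
  classical
  set q : ℕ := if a = 0 then 1 else p 0 with hq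
  have hqPS : PS P q := by
    by_cases ha : a = 0
    · rw [hq, if_pos ha]; exact PS.one P
    · rw [hq, if_neg ha]; exact PS.of_mem hP (hp 0)
  have hqa : q • a = 0 := by
    by_cases ha : a = 0
    · rw [ha, smul_zero]
    · rw [hq, if_neg ha]
      exact smul_eq_zero_of_dvd (p 0) (N 0) (p 0) dvd_rfl a
  have hinj : ∀ x : Hgrp p N 0, ∀ t < q, ∀ t' < q, t • a + x = t' • a + x → t = t' := by
    intro x t ht t' ht' heq
    by_cases ha : a = 0
    · rw [hq, if_pos ha] at ht ht'; omega
    · rw [hq, if_neg ha] at ht ht'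
      exact smul_inj_of_prime (p 0) (N 0) (hP _ (hp 0)) a ha t t' ht ht'
        (by rwa [add_left_inj] at heq)
  refine ⟨q, hqPS, ?_, ?_⟩
  · rw [← rho_pow]
    exact rho_pow_evalNF p N y a L q hqa
  · intro x
    refine ⟨?_, ?_, ?_, ?_⟩
    · rw [sec_pow_evalNF, evalZ_toNF p N y hy0]
    · rw [length_mixL, count_zsList]
      exact (sum_count_le q (fun t => t • a + x) (hinj x) L).trans le_rfl
    · rintro ⟨b₀, hb₀, hmiss⟩
      rw [length_mixL, count_zsList]
      exact sum_count_lt q (fun t => t • a + x) (hinj x) L b₀ hb₀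
        (fun t ht => hmiss t ht)
    · intro hgood z hz
      obtain ⟨t, ht, b, hb, rfl⟩ := mem_zsList p N a x L q z hz
      obtain ⟨t', ht', hbe⟩ := hgood b hb
      rw [← hbe]
      exact diff_mem_zmultiples a x t t'

theorem end2 (P : Finset ℕ) (hP : ∀ r ∈ P, r.Prime)
    (p N : ℕ → ℕ) (y : ∀ k, Fin (N (k + 1)) → Hgrp p N k)
    (hp : ∀ k, p k ∈ P) (hy0 : ∀ k j, y k j ≠ 0)
    (j₀ : Fin (N 0))
    (hAx : ∀ j' : Fin (N 1),
      y 0 j' ∉ AddSubgroup.zmultiples (Pi.single j₀ (1 : ZMod (p 0))))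
    (a : Hgrp p N 0) (L : List (Hgrp p N 0))
    (ha : a ∈ AddSubgroup.zmultiples (Pi.single j₀ (1 : ZMod (p 0))))
    (hL : ∀ c ∈ L, c ∈ AddSubgroup.zmultiples (Pi.single j₀ (1 : ZMod (p 0)))) :
    FinOrd P (evalNF p N y a L) := by
  classical
  haveI : NeZero (p 0) := ⟨(hP _ (hp 0)).pos.ne'⟩
  have hA : ∀ u : Hgrp p N 0, u ∈ AddSubgroup.zmultiples (Pi.single j₀ (1 : ZMod (p 0))) ↔ u ∈ AddSubgroup.zmultiples (Pi.single j₀ (1 : ZMod (p 0))) := fun u => Iff.rfl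
  set A : AddSubgroup (Hgrp p N 0) := AddSubgroup.zmultiples (Pi.single j₀ (1 : ZMod (p 0)))
  obtain ⟨q, hqPS, hrho, hx⟩ := sec_analysis P hP p N y hp (hy0 0) a L
  apply bootstrap P _ q hqPS hrho
  intro x
  obtain ⟨hsec, -, -, -⟩ := hx x
  rw [hsec]
  set zs := zsList p N a x L q with hzs
  by_cases hxA : x ∈ A
  · have hall : ∀ z ∈ zs, z ∈ A := by
      intro z hz
      obtain ⟨t, ht, b, hb, rfl⟩ := mem_zsList p N a x L q z hz
      exact A.sub_mem (A.add_mem (AddSubgroup.nsmul_mem A ha t) hxA) (hL b hb)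
    have hcond : ∀ z ∈ zs, ∀ h : (∃ j, y 0 j = z),
        Pi.single h.choose (1 : ZMod (p 1)) ∈ (⊥ : AddSubgroup (Hgrp p N 1)) := by
      intro z hz h
      exact absurd (show y 0 h.choose ∈ A by rw [h.choose_spec]; exact hall z hz) (hAx h.choose)
    obtain ⟨hA0, hL0⟩ := mix_mem p N y ⊥ zs hcond
    rw [AddSubgroup.mem_bot] at hA0
    rw [hA0, evalNF_zeros (fun k => p (k + 1)) (fun k => N (k + 1)) (fun k => y (k + 1))
      (mixL p N y zs) (fun c hc => AddSubgroup.mem_bot.1 (hL0 c hc))]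
    exact finOrd_w_pow P hP _ _ _ (fun k => hp (k + 1)) _
  · have h0 : (0 : Hgrp p N 0) ∉ zs := by
      intro h0m
      obtain ⟨t, ht, b, hb, heq⟩ := mem_zsList p N a x L q 0 h0m
      have hxb : x = b - t • a := by
        have := heq.symm
        rw [sub_eq_zero] at this
        rw [← this]; abel
      exact hxA (hxb ▸ A.sub_mem (hL b hb) (AddSubgroup.nsmul_mem A ha t))
    have hcnt : zs.count 0 = 0 := List.count_eq_zero.2 h0
    rw [mixL_nil_of_count p N y zs hcnt, evalNF, prodL_nil, mul_one]
    exact finOrd_rtd P (fun k => p (k + 1)) (fun k => N (k + 1)) (hp 1) hP (mixA p N y zs)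

/-- master statement for the induction on the number of directed letters -/
def Stmt (P : Finset ℕ) (l : ℕ) : Prop :=
  ∀ (p N : ℕ → ℕ) (y : ∀ k, Fin (N (k + 1)) → Hgrp p N k),
    (∀ k, p k ∈ P) → (∀ k, 0 < N k) → (∀ k j, y k j ≠ 0) →
    {i | DDmin p N y i}.Infinite →
    ∀ (a : Hgrp p N 0) (L : List (Hgrp p N 0)), L.length ≤ l →
    FinOrd P (evalNF p N y a L)

theorem infinite_ddmin_shift (p N : ℕ → ℕ) (y : ∀ k, Fin (N (k + 1)) → Hgrp p N k)
    (hdd : {i | DDmin p N y i}.Infinite) :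
    {i | DDmin (fun k => p (k + 1)) (fun k => N (k + 1)) (fun k => y (k + 1)) i}.Infinite := by
  have h1 : ({i | DDmin p N y i} \ {0}).Infinite := hdd.diff (Set.finite_singleton 0)
  have h2 : ({i | DDmin p N y i} \ {0}) ⊆ Set.range (fun i => i + 1) := by
    rintro x ⟨hx, hx0⟩
    have hx1 : x ≠ 0 := by simpa using hx0
    exact ⟨x - 1, by show x - 1 + 1 = x; omega⟩
  have h3 := h1.preimage h2
  refine h3.mono ?_
  rintro i ⟨hi, -⟩
  exact hi

theorem ddmin_shift (p N : ℕ → ℕ) (y : ∀ k, Fin (N (k + 1)) → Hgrp p N k) (i : ℕ)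
    (h : DDmin p N y (i + 1)) :
    DDmin (fun k => p (k + 1)) (fun k => N (k + 1)) (fun k => y (k + 1)) i := h

theorem descent (P : Finset ℕ) (hP : ∀ r ∈ P, r.Prime) :
    ∀ (i l : ℕ), (∀ l' < l, Stmt P l') →
      ∀ (p N : ℕ → ℕ) (y : ∀ k, Fin (N (k + 1)) → Hgrp p N k),
        (∀ k, p k ∈ P) → (∀ k, 0 < N k) → (∀ k j, y k j ≠ 0) →
        {i | DDmin p N y i}.Infinite → DDmin p N y i →
        ∀ (a : Hgrp p N 0) (L : List (Hgrp p N 0)), L.length ≤ l →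
        FinOrd P (evalNF p N y a L)
  | 0, l, IH, p, N, y, hp, hN, hy0, hdd, hi, a, L, hlen => by
    classical
    haveI : NeZero (p 0) := ⟨(hP _ (hp 0)).pos.ne'⟩
    obtain ⟨q, hqPS, hrho, hx⟩ := sec_analysis P hP p N y hp (hy0 0) a L
    apply bootstrap P _ q hqPS hrho
    intro x
    obtain ⟨hsec, hle, hstrict, hzmul⟩ := hx x
    rw [hsec]
    by_cases hgood : ∀ b ∈ L, ∃ t, t < q ∧ t • a + x = b
    · have hz := hzmul hgood
      set zs := zsList p N a x L q with hzs
      by_cases hZ : ∃ j, y 0 j ∈ AddSubgroup.zmultiples a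
      · set j₀ := hZ.choose with hj₀
        have hcond : ∀ z ∈ zs, ∀ h : (∃ j, y 0 j = z),
            Pi.single h.choose (1 : ZMod (p 1)) ∈
              AddSubgroup.zmultiples (Pi.single j₀ (1 : ZMod (p 1)) : Hgrp p N 1) := by
          intro z hzz h
          by_cases ha : a = 0
          · exfalso
            have hz0 : z = 0 := by
              have := hz z hzz
              rw [ha] at this
              obtain ⟨k, hk⟩ := AddSubgroup.mem_zmultiples_iff.1 this
              rw [← hk, smul_zero]
            exact hy0 0 h.choose (hz0 ▸ h.choose_spec)
          · have hsub := hi.1 a ha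
            have h1 : h.choose ∈ {j | y 0 j ∈ AddSubgroup.zmultiples a} := by
              show y 0 h.choose ∈ AddSubgroup.zmultiples a
              rw [h.choose_spec]
              exact hz z hzz
            have h2 : j₀ ∈ {j | y 0 j ∈ AddSubgroup.zmultiples a} := hZ.choose_spec
            rw [hsub h1 h2]
            exact AddSubgroup.mem_zmultiples _
        obtain ⟨hmA, hmL⟩ := mix_mem p N y _ zs hcond
        exact end2 P hP _ _ _ (fun k => hp (k + 1)) (fun k => hy0 (k + 1)) j₀
          (hi.2 j₀) _ _ hmA hmL
      · have hcond : ∀ z ∈ zs, ∀ h : (∃ j, y 0 j = z),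
            Pi.single h.choose (1 : ZMod (p 1)) ∈
              AddSubgroup.zmultiples (Pi.single (⟨0, hN 1⟩ : Fin (N 1)) (1 : ZMod (p 1)) : Hgrp p N 1) := by
          intro z hzz h
          exact absurd ⟨h.choose, show y 0 h.choose ∈ AddSubgroup.zmultiples a by rw [h.choose_spec]; exact hz z hzz⟩ hZ
        obtain ⟨hmA, hmL⟩ := mix_mem p N y _ zs hcond
        exact end2 P hP _ _ _ (fun k => hp (k + 1)) (fun k => hy0 (k + 1)) ⟨0, hN 1⟩
          (hi.2 ⟨0, hN 1⟩) _ _ hmA hmL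
    · have hbad : ∃ b ∈ L, ∀ t < q, t • a + x ≠ b := by
        push_neg at hgood
        obtain ⟨b, hb, hbt⟩ := hgood
        exact ⟨b, hb, hbt⟩
      have hlt := hstrict hbad
      exact IH _ (lt_of_lt_of_le hlt hlen) _ _ _ (fun k => hp (k + 1)) (fun k => hN (k + 1))
        (fun k => hy0 (k + 1)) (infinite_ddmin_shift p N y hdd) _ _ le_rfl
  | i + 1, l, IH, p, N, y, hp, hN, hy0, hdd, hi, a, L, hlen => by
    classical
    haveI : NeZero (p 0) := ⟨(hP _ (hp 0)).pos.ne'⟩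
    obtain ⟨q, hqPS, hrho, hx⟩ := sec_analysis P hP p N y hp (hy0 0) a L
    apply bootstrap P _ q hqPS hrho
    intro x
    obtain ⟨hsec, hle, -, -⟩ := hx x
    rw [hsec]
    exact descent P hP i l IH _ _ _ (fun k => hp (k + 1)) (fun k => hN (k + 1))
      (fun k => hy0 (k + 1)) (infinite_ddmin_shift p N y hdd)
      (ddmin_shift p N y i hi) _ _ (hle.trans hlen)

theorem main (P : Finset ℕ) (hP : ∀ r ∈ P, r.Prime) : ∀ l, Stmt P l := by
  intro l
  induction l using Nat.strong_induction_on with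
  | _ l IH =>
    intro p N y hp hN hy0 hdd a L hlen
    obtain ⟨i, hi⟩ := hdd.nonempty
    exact descent P hP i l IH p N y hp hN hy0 hdd hi a L hlen

end DicePaper
open DicePaper in
/-- if condition DDmin holds at infinitely many steps, then the dice
group `G = ⟨w₁, A₁⟩` is periodic and the order of every element is a product of
primes from `P`. -/
theorem stmt15 (P : Finset ℕ) (hP : ∀ q ∈ P, q.Prime)
    (p : ℕ → ℕ) (hp : ∀ i, p i ∈ P)
    (N : ℕ → ℕ) (hN : ∀ i, 0 < N i)
    (y : ∀ k, Fin (N (k + 1)) → Hgrp p N k)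
    (hy0 : ∀ k j, y k j ≠ 0)
    (hyinj : ∀ k, Function.Injective (y k))
    (hddmin : {i : ℕ | DDmin p N y i}.Infinite) :
    ∀ g ∈ diceGroup p N y,
      IsOfFinOrder g ∧ ∀ q : ℕ, q.Prime → q ∣ orderOf g → q ∈ P := by
  intro g hg
  obtain ⟨a, L, rfl⟩ := diceGroup_nf p N y P hP hp g hg
  obtain ⟨M, hMPS, hM1⟩ :=
    main P hP L.length p N y hp hN hy0 hddmin a L le_rfl
  have hfin : IsOfFinOrder (evalNF p N y a L) :=
    isOfFinOrder_iff_pow_eq_one.2 ⟨M, hMPS.1, hM1⟩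
  refine ⟨hfin, fun q hq hdvd => ?_⟩
  exact hMPS.2 q hq (hdvd.trans (orderOf_dvd_of_pow_eq_one hM1))
end
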